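/- arXiv:1006.2926 — 5 statements merged into one kernel-verified Lean document; each statement's English description precedes it below -/
import Mathlib

section
/- Let H = (V, E) be a hypergraph with n vertices, let k ≥ 2 be a fixed integer, let 0 < α ≤ 1 be a fixed real, and let C > 0 be a constant. If every vertex-induced sub-hypergraph H' of H with m vertices admits a k-colorful coloring with at most C·k·m^α colors (i.e., c_{H'}(k) ≤ C·k·m^α), then there exists a constant C' depending only on C and α such that H admits a (k−1)-strong-conflict-free coloring with at most C'·k·n^α colors; that is, f_H(k−1) = O(k·n^α). -/
/-- A coloring `φ` is `k`-colorful for the hyperedge family `E` if every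
hyperedge `e ∈ E` contains `min |e| k` vertices with pairwise distinct colors. -/
def IsColorful {V C : Type} (k : ℕ) (E : Set (Finset V)) (φ : V → C) : Prop :=
  ∀ e ∈ E, ∃ S ⊆ e, S.card = min e.card k ∧ Set.InjOn φ ↑S

/-- A coloring `φ` is `k`-strong-conflict-free for the hyperedge family `E` if every
hyperedge of size at least `k` contains `k` vertices whose colors appear exactly once
in the hyperedge, and every hyperedge of size less than `k` is rainbow. -/
def IsSCF {V C : Type} (k : ℕ) (E : Set (Finset V)) (φ : V → C) : Prop :=
  ∀ e ∈ E,
    (k ≤ e.card → ∃ S ⊆ e, S.card = k ∧ ∀ v ∈ S, ∀ u ∈ e, φ u = φ v → u = v) ∧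
    (e.card < k → Set.InjOn φ ↑e)

/-!
Peel off a largest color class `M` of a `k`-colorful coloring of the current vertex set, color the
rest recursively, and give `M` a fresh color above all colors used on the rest. A hyperedge meets
`M` in at most one of its `k` distinctly colored vertices, so at least `k - 1` of its vertices
outside `M` stay uniquely colored. With `m` vertices, `M` has at least `m / (C k m ^ α)` of them,
and Bernoulli's inequality `(1 - x) ^ α ≤ 1 - α x` shows that the number of rounds stays below
`(C / α) k m ^ α`.
-/

open Finset

section Recoloring

variable {V β : Type}

/-- `ψ` is `(k-1)`-strong-conflict-free on `t`, and rainbow on `t` already when `t.card ≤ k`: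
this strengthening of `IsSCF (k - 1)` is what survives recoloring a color class. -/
def IsRainbowSCFOn (k : ℕ) (ψ : V → β) (t : Finset V) : Prop :=
  (t.card ≤ k → Set.InjOn ψ t) ∧
    (k - 1 ≤ t.card → ∃ S ⊆ t, S.card = k - 1 ∧ ∀ v ∈ S, ∀ u ∈ t, ψ u = ψ v → u = v)

lemma isSCF_of_forall_isRainbowSCFOn {k : ℕ} {E : Set (Finset V)} {ψ : V → β}
    (h : ∀ e ∈ E, IsRainbowSCFOn k ψ e) : IsSCF (k - 1) E ψ :=
  fun e he => ⟨(h e he).2, fun hlt => (h e he).1 (by omega)⟩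

variable [DecidableEq V]

lemma card_sub_one_le_card_sdiff {t M S : Finset V} {φ : V → β} (hSt : S ⊆ t)
    (hφ : Set.InjOn φ S) (hM : ∀ u ∈ M, ∀ v ∈ M, φ u = φ v) : S.card - 1 ≤ (t \ M).card := by
  have hSM : (S ∩ M).card ≤ 1 := card_le_one.2 fun u hu v hv =>
    hφ (mem_inter.1 hu).1 (mem_inter.1 hv).1 (hM u (mem_inter.1 hu).2 v (mem_inter.1 hv).2)
  have hS : (S \ M).card ≤ (t \ M).card := card_le_card (sdiff_subset_sdiff hSt le_rfl)
  have := card_sdiff_add_card_inter S M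
  omega

variable {t M : Finset V} {ψ : V → ℕ} {T : ℕ}

lemma injOn_piecewise_of_lt {φ : V → β} (hφ : Set.InjOn φ t)
    (hM : ∀ u ∈ M, ∀ v ∈ M, φ u = φ v) (hT : ∀ v ∈ t \ M, ψ v < T)
    (hψ : Set.InjOn ψ ↑(t \ M)) : Set.InjOn (M.piecewise (fun _ => T) ψ) t := by
  intro u hu v hv huv
  by_cases huM : u ∈ M <;> by_cases hvM : v ∈ M <;>
    simp only [piecewise_eq_of_mem, piecewise_eq_of_notMem, huM, hvM, not_false_eq_true]
      at huv
  · exact hφ hu hv (hM u huM v hvM)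
  · have := hT v (mem_sdiff.2 ⟨hv, hvM⟩)
    omega
  · have := hT u (mem_sdiff.2 ⟨hu, huM⟩)
    omega
  · exact hψ (by simp [mem_coe.1 hu, huM]) (by simp [mem_coe.1 hv, hvM]) huv

lemma unique_piecewise_of_lt (hT : ∀ v ∈ t \ M, ψ v < T) {v : V} (hv : v ∈ t \ M)
    (hψv : ∀ u ∈ t \ M, ψ u = ψ v → u = v) :
    ∀ u ∈ t, M.piecewise (fun _ => T) ψ u = M.piecewise (fun _ => T) ψ v → u = v := by
  intro u hu huv
  have hvM := (mem_sdiff.1 hv).2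
  by_cases huM : u ∈ M
  · simp only [piecewise_eq_of_mem _ _ _ huM, piecewise_eq_of_notMem _ _ _ hvM] at huv
    have := hT v hv
    omega
  · simp only [piecewise_eq_of_notMem _ _ _ huM, piecewise_eq_of_notMem _ _ _ hvM] at huv
    exact hψv u (mem_sdiff.2 ⟨hu, huM⟩) huv

lemma IsRainbowSCFOn.piecewise_of_lt {k : ℕ} {φ : V → β}
    (hφ : ∃ S ⊆ t, S.card = min t.card k ∧ Set.InjOn φ S)
    (hM : ∀ u ∈ M, ∀ v ∈ M, φ u = φ v) (hT : ∀ v ∈ t \ M, ψ v < T)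
    (hψ : IsRainbowSCFOn k ψ (t \ M)) : IsRainbowSCFOn k (M.piecewise (fun _ => T) ψ) t := by
  obtain ⟨S₀, hS₀t, hS₀card, hS₀inj⟩ := hφ
  have hinj : t.card ≤ k → Set.InjOn (M.piecewise (fun _ => T) ψ) t := fun htk => by
    have hS₀ : S₀ = t := eq_of_subset_of_card_le hS₀t (by omega)
    exact injOn_piecewise_of_lt (hS₀ ▸ hS₀inj) hM hT
      (hψ.1 ((card_le_card sdiff_subset).trans htk))
  refine ⟨hinj, fun hkt => ?_⟩
  rcases le_or_gt t.card k with htk | htk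
  · obtain ⟨S, hSt, hScard⟩ := exists_subset_card_eq hkt
    exact ⟨S, hSt, hScard, fun v hv u hu huv => hinj htk hu (hSt hv) huv⟩
  · have hkM : k - 1 ≤ (t \ M).card := by
      have := card_sub_one_le_card_sdiff hS₀t hS₀inj hM
      omega
    obtain ⟨S, hS, hScard, huniq⟩ := hψ.2 hkM
    exact ⟨S, hS.trans sdiff_subset, hScard,
      fun v hv => unique_piecewise_of_lt hT (hS hv) (huniq v hv)⟩

end Recoloring

lemma mul_rpow_add_one_le {α A m m' N : ℝ} (hα0 : 0 < α) (hα1 : α ≤ 1) (hm : 0 < m)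
    (hN : 1 ≤ N) (hNm : N ≤ α * A * m ^ α) (hm'0 : 0 ≤ m') (hm' : m' ≤ m - m / N) :
    A * m' ^ α + 1 ≤ A * m ^ α := by
  have hmα : 0 < m ^ α := Real.rpow_pos_of_pos hm α
  have hA : 0 < A := by
    by_contra! hA
    nlinarith [mul_nonpos_of_nonneg_of_nonpos (mul_pos hα0 hmα).le hA]
  have hN1 : 1 / N ≤ 1 := (div_le_one (by linarith)).2 hN
  have hbern : (m - m / N) ^ α ≤ m ^ α * (1 - α / N) := by
    rw [show m - m / N = m * (1 + -(1 / N)) by ring, Real.mul_rpow hm.le (by linarith)]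
    gcongr
    exact (rpow_one_add_le_one_add_mul_self (s := -(1 / N)) (by linarith) hα0.le hα1).trans_eq
      (by ring)
  have hdiv : 1 ≤ α * A * m ^ α / N := (one_le_div (by linarith)).2 hNm
  calc A * m' ^ α + 1 ≤ A * (m ^ α * (1 - α / N)) + 1 := by
        gcongr
        exact (Real.rpow_le_rpow hm'0 hm' hα0.le).trans hbern
    _ = A * m ^ α - α * A * m ^ α / N + 1 := by ring
    _ ≤ A * m ^ α := by linarith

lemma exists_isRainbowSCFOn_coloring {V : Type} [DecidableEq V] {E : Set (Finset V)} {k : ℕ}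
    {C α : ℝ} (hα0 : 0 < α) (hα1 : α ≤ 1)
    (hH : ∀ V' : Finset V, ∃ φ : V → ℕ,
      ((V'.image φ).card : ℝ) ≤ C * k * (V'.card : ℝ) ^ α ∧
      IsColorful k {e | ∃ e₀ ∈ E, e = e₀ ∩ V' ∧ e.Nonempty} φ)
    (V' : Finset V) :
    ∃ (T : ℕ) (ψ : V → ℕ), (T : ℝ) ≤ C / α * k * (V'.card : ℝ) ^ α ∧
      (∀ v ∈ V', ψ v < T) ∧ ∀ e ∈ E, IsRainbowSCFOn k ψ (e ∩ V') := by
  induction V' using Finset.strongInduction with | H V' ih =>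
  rcases V'.eq_empty_or_nonempty with rfl | hne
  · refine ⟨0, fun _ => 0, by simp [Real.zero_rpow hα0.ne'], by simp, fun e _ => ?_⟩
    exact ⟨by simp, fun hk => ⟨∅, by simp, by simp at hk ⊢; omega, by simp⟩⟩
  obtain ⟨φ, hφcard, hφcol⟩ := hH V'
  set N := (V'.image φ).card
  have hNpos : (0 : ℝ) < N := by exact_mod_cast (hne.image φ).card_pos
  obtain ⟨c, -, hc⟩ := exists_le_card_fiber_of_nsmul_le_card_of_maps_to
    (fun v hv => mem_image_of_mem φ hv) (hne.image φ) (b := (V'.card : ℝ) / N)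
    (by rw [nsmul_eq_mul, mul_div_cancel₀ _ hNpos.ne'])
  set M := V'.filter (φ · = c)
  have hm : (0 : ℝ) < V'.card := by exact_mod_cast hne.card_pos
  have hMne : M.Nonempty := card_pos.1 (by exact_mod_cast (div_pos hm hNpos).trans_le hc)
  obtain ⟨T, ψ, hT, hψT, hψ⟩ := ih (V' \ M) (sdiff_ssubset (filter_subset _ _) hMne)
  refine ⟨T + 1, M.piecewise (fun _ => T) ψ, ?_, fun v hv => ?_, fun e he => ?_⟩
  · have hcard : ((V' \ M).card : ℝ) = V'.card - M.card := by
      rw [card_sdiff_of_subset (filter_subset _ _), Nat.cast_sub (card_le_card (filter_subset _ _))]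
    have := mul_rpow_add_one_le hα0 hα1 hm (by exact_mod_cast (hne.image φ).card_pos)
      (by rwa [show α * (C / α * k) = C * k by field_simp]) (Nat.cast_nonneg _)
      (by linarith : ((V' \ M).card : ℝ) ≤ V'.card - V'.card / N)
    push_cast
    linarith
  · by_cases hvM : v ∈ M
    · simp [hvM]
    · simpa [hvM] using (hψT v (mem_sdiff.2 ⟨hv, hvM⟩)).trans (Nat.lt_succ_self T)
  · have htrace : e ∩ (V' \ M) = (e ∩ V') \ M := (inter_sdiff_assoc _ _ _).symm
    refine IsRainbowSCFOn.piecewise_of_lt ?_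
      (fun u hu v hv => (mem_filter.1 hu).2.trans (mem_filter.1 hv).2.symm)
      (fun v hv => hψT v (mem_inter.1 (htrace ▸ hv)).2) (htrace ▸ hψ e he)
    rcases (e ∩ V').eq_empty_or_nonempty with h | h
    · exact ⟨∅, by simp, by simp [h], by simp⟩
    · exact hφcol _ ⟨e, he, rfl, h⟩

theorem stmt1 (C α : ℝ) (hC : 0 < C) (hα0 : 0 < α) (hα1 : α ≤ 1) :
    ∃ C' : ℝ, 0 < C' ∧
      ∀ (V : Type) [Fintype V] [DecidableEq V] (E : Set (Finset V)),
        (∀ e ∈ E, e.Nonempty) → ∀ k : ℕ, 2 ≤ k →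
        (∀ V' : Finset V, ∃ φ : V → ℕ,
          ((V'.image φ).card : ℝ) ≤ C * k * (V'.card : ℝ) ^ α ∧
          IsColorful k {e | ∃ e₀ ∈ E, e = e₀ ∩ V' ∧ e.Nonempty} φ) →
        ∃ φ : V → ℕ, IsSCF (k - 1) E φ ∧
          ((Finset.univ.image φ).card : ℝ) ≤ C' * k * (Fintype.card V : ℝ) ^ α := by
  refine ⟨C / α, by positivity, fun V _ _ E _ k _ hH => ?_⟩
  obtain ⟨T, ψ, hT, hψT, hψ⟩ := exists_isRainbowSCFOn_coloring hα0 hα1 hH univ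
  refine ⟨ψ, isSCF_of_forall_isRainbowSCFOn fun e he => by simpa using hψ e he, ?_⟩
  have hcard : (univ.image ψ).card ≤ T :=
    (card_le_card (image_subset_iff.2 fun v hv => mem_range.2 (hψT v hv))).trans
      (card_range T).le
  calc ((univ.image ψ).card : ℝ) ≤ T := by exact_mod_cast hcard
    _ ≤ C / α * k * (Fintype.card V : ℝ) ^ α := by simpa using hT
end

section
/- Let k ≥ 1 be an integer, let 0 ≤ α ≤ 1 be a real, and let d > 0 be a constant. Let R be a finite family of n regions (subsets) of ℝ² such that for every subfamily R' ⊆ R with m regions, the graph G_0(R') has at most (d/2)·m^{1+α} edges. Then the graph G_k(R) is (4·d·k·n^α)-degenerate: every vertex-induced subgraph of G_k(R) on m vertices contains a vertex of degree at most 4·d·k·m^α. -/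
/-- The hyperedge of the hypergraph `H(R)` induced by the family of regions `R`
at the point `p`: the set of (indices of) regions containing `p`. -/
def hyperedge {ι X : Type} (R : ι → Set X) (p : X) : Set ι := {i | p ∈ R i}

/-- The graph `G_k(R')` for the subfamily `R' = {R i : i ∈ V}` of the family of
planar regions `R`: two distinct regions `r, s ∈ V` are adjacent iff some point
`p ∈ r ∩ s` is contained in at most `k` regions of `R' \ {r, s}`. -/
def GkOn {ι : Type} (k : ℕ) (R : ι → Set (ℝ × ℝ)) (V : Set ι) : SimpleGraph ι where
  Adj r s := r ≠ s ∧ r ∈ V ∧ s ∈ V ∧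
    ∃ p, p ∈ R r ∧ p ∈ R s ∧ ({t | t ∈ V ∧ t ≠ r ∧ t ≠ s ∧ p ∈ R t}).ncard ≤ k
  symm := ⟨by
    rintro r s ⟨hne, hrV, hsV, p, hr, hs, hcard⟩
    refine ⟨hne.symm, hsV, hrV, p, hs, hr, ?_⟩
    have hset : {t | t ∈ V ∧ t ≠ s ∧ t ≠ r ∧ p ∈ R t}
        = {t | t ∈ V ∧ t ≠ r ∧ t ≠ s ∧ p ∈ R t} := by
      ext t; simp only [Set.mem_setOf_eq]; tauto
    rw [hset]; exact hcard⟩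
  loopless := ⟨by rintro r ⟨hne, -⟩; exact hne rfl⟩

/-!
Fix a subfamily `V` of `m` regions and sample `S ⊆ V` keeping each region independently with
probability `q = 1/(2k)`. An edge `rs` of `G_k(V)` is witnessed by a point lying in at most `k` further
regions of `V`; it survives as an edge of `G_0(S)` whenever `r, s ∈ S` and none of those regions
is kept, which happens with probability at least `q²(1-q)^k ≥ q²/2` by Bernoulli's inequality.
Averaging the hypothesis on `G_0(S)` and using `|S|^{1+α} ≤ m^α |S|`, `E|S| = qm`, gives
`|E(G_k(V))| ≤ 2dk m^{1+α}`. The subgraph of `G_k(R)` induced on `V` is a subgraph of `G_k(V)`,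
so its average degree is at most `4dk m^α`.
-/

open Finset

lemma Real.rpow_one_add_le_mul_rpow {x y α : ℝ} (hx : 0 ≤ x) (hxy : x ≤ y) (hα : 0 ≤ α) :
    x ^ (1 + α) ≤ x * y ^ α := by
  rw [Real.rpow_one_add' hx (by linarith)]
  exact mul_le_mul_of_nonneg_left (Real.rpow_le_rpow hx hxy hα) hx

lemma half_le_one_sub_inv_two_mul_pow (k : ℕ) : 1 / 2 ≤ (1 - (2 * k : ℝ)⁻¹) ^ k := by
  rcases Nat.eq_zero_or_pos k with rfl | hk
  · norm_num
  have hq : (2 * k : ℝ)⁻¹ ≤ 1 := inv_le_one_of_one_le₀ (by norm_cast; omega)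
  have hkq : (k : ℝ) * (2 * k : ℝ)⁻¹ = 1 / 2 := by field_simp
  have hbernoulli := one_add_mul_le_pow (a := -(2 * k : ℝ)⁻¹) (by linarith) k
  rw [← sub_eq_add_neg, mul_neg, hkq] at hbernoulli
  linarith

section BernoulliWeight

variable {ι : Type*} {q : ℝ}

def bernoulliWeight (q : ℝ) (V S : Finset ι) : ℝ := q ^ #S * (1 - q) ^ (#V - #S)

lemma bernoulliWeight_nonneg (hq0 : 0 ≤ q) (hq1 : q ≤ 1) (V S : Finset ι) :
    0 ≤ bernoulliWeight q V S := by
  have : 0 ≤ 1 - q := by linarith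
  unfold bernoulliWeight
  positivity

variable [DecidableEq ι]

lemma Finset.sum_powerset_filter_superset_disjoint {M : Type*} [AddCommMonoid M]
    (f : Finset ι → M) {V D W : Finset ι} (hD : D ⊆ V) (hDW : Disjoint D W) :
    ∑ S ∈ V.powerset with D ⊆ S ∧ Disjoint S W, f S =
      ∑ T ∈ (V \ (D ∪ W)).powerset, f (D ∪ T) := by
  refine sum_nbij' (· \ D) (D ∪ ·) ?_ ?_ ?_ ?_ fun S hS => ?_
  · intro S hS
    simp only [mem_filter, mem_powerset] at hS ⊢
    intro x hx
    simp only [mem_sdiff, mem_union] at hx ⊢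
    exact ⟨hS.1 hx.1, by rintro (h | h); exacts [hx.2 h, disjoint_left.1 hS.2.2 hx.1 h]⟩
  · intro T hT
    simp only [mem_filter, mem_powerset] at hT ⊢
    refine ⟨union_subset hD (hT.trans sdiff_subset), subset_union_left, ?_⟩
    refine disjoint_union_left.2 ⟨hDW, disjoint_left.2 fun x hx hxW => ?_⟩
    exact (mem_sdiff.1 (hT hx)).2 (mem_union_right _ hxW)
  · intro S hS
    exact union_sdiff_of_subset (mem_filter.1 hS).2.1
  · intro T hT
    refine union_sdiff_cancel_left (disjoint_left.2 fun x hxD hxT => ?_)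
    exact (mem_sdiff.1 (mem_powerset.1 hT hxT)).2 (mem_union_left _ hxD)
  · rw [union_sdiff_of_subset (mem_filter.1 hS).2.1]

lemma sum_bernoulliWeight_superset_disjoint {V D W : Finset ι} (hD : D ⊆ V) (hW : W ⊆ V)
    (hDW : Disjoint D W) :
    ∑ S ∈ V.powerset with D ⊆ S ∧ Disjoint S W, bernoulliWeight q V S =
      q ^ #D * (1 - q) ^ #W := by
  set A := V \ (D ∪ W)
  have hA : #A + #D + #W = #V := by
    rw [card_sdiff_of_subset (union_subset hD hW), card_union_of_disjoint hDW]
    have := card_le_card (union_subset hD hW)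
    rw [card_union_of_disjoint hDW] at this
    omega
  calc ∑ S ∈ V.powerset with D ⊆ S ∧ Disjoint S W, bernoulliWeight q V S
      = ∑ T ∈ A.powerset, q ^ #D * (1 - q) ^ #W * (q ^ #T * (1 - q) ^ (#A - #T)) := by
        rw [sum_powerset_filter_superset_disjoint _ hD hDW]
        refine sum_congr rfl fun T hT => ?_
        have hTA : #T ≤ #A := card_le_card (mem_powerset.1 hT)
        have hDT : Disjoint D T := disjoint_left.2 fun x hxD hxT =>
          (mem_sdiff.1 (mem_powerset.1 hT hxT)).2 (mem_union_left _ hxD)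
        rw [bernoulliWeight, card_union_of_disjoint hDT, mul_mul_mul_comm, ← pow_add, ← pow_add]
        congr 2; omega
    _ = q ^ #D * (1 - q) ^ #W := by
        rw [← mul_sum, sum_pow_mul_eq_add_pow, add_sub_cancel, one_pow, mul_one]

lemma sum_bernoulliWeight_mul_card (V : Finset ι) :
    ∑ S ∈ V.powerset, bernoulliWeight q V S * #S = q * #V := by
  calc ∑ S ∈ V.powerset, bernoulliWeight q V S * #S
      = ∑ v ∈ V, ∑ S ∈ V.powerset with {v} ⊆ S ∧ Disjoint S ∅,
          bernoulliWeight q V S := by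
        simp only [disjoint_empty_right, and_true, singleton_subset_iff, sum_filter]
        rw [sum_comm]
        refine sum_congr rfl fun S hS => ?_
        rw [← sum_filter, filter_mem_eq_inter, inter_eq_right.2 (mem_powerset.1 hS), sum_const,
          nsmul_eq_mul, mul_comm]
    _ = q * #V := by
        rw [sum_congr rfl fun v hv => sum_bernoulliWeight_superset_disjoint
          (singleton_subset_iff.2 hv) (empty_subset V) (disjoint_empty_right _)]
        simp [mul_comm]

lemma sum_bernoulliWeight_mul_le_of_le_rpow (hq0 : 0 ≤ q) (hq1 : q ≤ 1) {α c : ℝ}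
    (hα : 0 ≤ α) (hc : 0 ≤ c) {V : Finset ι} {f : Finset ι → ℝ}
    (hf : ∀ S ⊆ V, f S ≤ c * (#S : ℝ) ^ (1 + α)) :
    ∑ S ∈ V.powerset, bernoulliWeight q V S * f S ≤ c * q * (#V : ℝ) ^ (1 + α) := by
  calc ∑ S ∈ V.powerset, bernoulliWeight q V S * f S
      ≤ ∑ S ∈ V.powerset, c * (#V : ℝ) ^ α * (bernoulliWeight q V S * #S) := by
        refine sum_le_sum fun S hS => ?_
        have hSV : (#S : ℝ) ≤ #V := by exact_mod_cast card_le_card (mem_powerset.1 hS)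
        calc bernoulliWeight q V S * f S
            ≤ bernoulliWeight q V S * (c * (#S * (#V : ℝ) ^ α)) := by
              gcongr
              · exact bernoulliWeight_nonneg hq0 hq1 V S
              · refine (hf S (mem_powerset.1 hS)).trans ?_
                gcongr
                exact Real.rpow_one_add_le_mul_rpow (by positivity) hSV hα
          _ = c * (#V : ℝ) ^ α * (bernoulliWeight q V S * #S) := by ring
    _ = c * q * (#V : ℝ) ^ (1 + α) := by
        rw [← mul_sum, sum_bernoulliWeight_mul_card,
          Real.rpow_one_add' (by positivity) (by linarith)]
        ring

end BernoulliWeight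

namespace GkOn

variable {ι : Type} {R : ι → Set (ℝ × ℝ)} {k : ℕ} {q : ℝ}

lemma adj_of_adj_univ [Finite ι] {V : Set ι} {u v : ι} (h : (GkOn k R Set.univ).Adj u v)
    (hu : u ∈ V) (hv : v ∈ V) : (GkOn k R V).Adj u v := by
  obtain ⟨hne, -, -, p, hpu, hpv, hcard⟩ := h
  refine ⟨hne, hu, hv, p, hpu, hpv, (Set.ncard_le_ncard ?_).trans hcard⟩
  exact fun t ht => ⟨Set.mem_univ t, ht.2⟩

lemma exists_blockers {V : Finset ι} {r s : ι} (h : (GkOn k R V).Adj r s) :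
    ∃ W ⊆ V, #W ≤ k ∧ r ∉ W ∧ s ∉ W ∧
      ∀ S ⊆ V, r ∈ S → s ∈ S → Disjoint S W → (GkOn 0 R S).Adj r s := by
  classical
  obtain ⟨hne, -, -, p, hpr, hps, hcard⟩ := h
  refine ⟨{t ∈ V | t ≠ r ∧ t ≠ s ∧ p ∈ R t}, filter_subset _ _, ?_, by simp, by simp,
    fun S hSV hrS hsS hSW => ⟨hne, hrS, hsS, p, hpr, hps, ?_⟩⟩
  · rw [← Set.ncard_coe_finset, coe_filter]
    exact hcard
  · rw [Nat.le_zero, Set.ncard_eq_zero]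
    ext t
    simp only [Set.mem_ofPred_eq, mem_coe, Set.mem_empty_iff_false, iff_false]
    rintro ⟨htS, htr, hts, hpt⟩
    exact disjoint_left.1 hSW htS (mem_filter.2 ⟨hSV htS, htr, hts, hpt⟩)

open scoped Classical in
lemma le_sum_bernoulliWeight_zero_adj (hq0 : 0 ≤ q) (hq1 : q ≤ 1) {V : Finset ι} {r s : ι}
    (h : (GkOn k R V).Adj r s) :
    q ^ 2 * (1 - q) ^ k ≤
      ∑ S ∈ V.powerset with (GkOn 0 R ↑(S : Finset ι)).Adj r s, bernoulliWeight q V S := by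
  obtain ⟨W, hWV, hWk, hrW, hsW, hW⟩ := exists_blockers h
  have hrs : ({r, s} : Finset ι) ⊆ V :=
    insert_subset_iff.2 ⟨h.2.1, singleton_subset_iff.2 h.2.2.1⟩
  have hrsW : Disjoint {r, s} W := by simp [hrW, hsW]
  calc q ^ 2 * (1 - q) ^ k ≤ q ^ #({r, s} : Finset ι) * (1 - q) ^ #W := by
        rw [card_pair h.ne]
        exact mul_le_mul_of_nonneg_left (pow_le_pow_of_le_one (by linarith) (by linarith) hWk)
          (by positivity)
    _ = ∑ S ∈ V.powerset with {r, s} ⊆ S ∧ Disjoint S W, bernoulliWeight q V S :=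
        (sum_bernoulliWeight_superset_disjoint hrs hWV hrsW).symm
    _ ≤ ∑ S ∈ V.powerset with (GkOn 0 R ↑(S : Finset ι)).Adj r s,
          bernoulliWeight q V S := by
        refine sum_le_sum_of_subset_of_nonneg ?_ fun S _ _ => bernoulliWeight_nonneg hq0 hq1 V S
        intro S hS
        simp only [mem_filter, mem_powerset, insert_subset_iff, singleton_subset_iff] at hS ⊢
        exact ⟨hS.1, hW S hS.1 hS.2.1.1 hS.2.1.2 hS.2.2⟩

lemma ncard_edgeSet_mul_le_sum [Fintype ι] (hq0 : 0 ≤ q) (hq1 : q ≤ 1) (V : Finset ι) :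
    (GkOn k R V).edgeSet.ncard * (q ^ 2 * (1 - q) ^ k) ≤
      ∑ S ∈ V.powerset, bernoulliWeight q V S * (GkOn 0 R ↑S).edgeSet.ncard := by
  classical
  set E := (GkOn k R V).edgeFinset
  have hE : ∀ e ∈ E, q ^ 2 * (1 - q) ^ k ≤
      ∑ S ∈ V.powerset with e ∈ (GkOn 0 R ↑(S : Finset ι)).edgeSet,
        bernoulliWeight q V S := by
    intro e he
    induction e using Sym2.ind with
    | _ r s => exact le_sum_bernoulliWeight_zero_adj hq0 hq1 (SimpleGraph.mem_edgeFinset.1 he)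
  calc ((GkOn k R V).edgeSet.ncard : ℝ) * (q ^ 2 * (1 - q) ^ k)
      ≤ ∑ e ∈ E, ∑ S ∈ V.powerset with e ∈ (GkOn 0 R ↑(S : Finset ι)).edgeSet,
          bernoulliWeight q V S := by
        rw [Set.ncard_eq_toFinset_card', ← nsmul_eq_mul]
        exact card_nsmul_le_sum E _ _ hE
    _ = ∑ S ∈ V.powerset,
          bernoulliWeight q V S * #{e ∈ E | e ∈ (GkOn 0 R ↑S).edgeSet} := by
        simp only [sum_filter, card_filter, Nat.cast_sum, mul_sum]
        rw [sum_comm]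
        simp
    _ ≤ ∑ S ∈ V.powerset, bernoulliWeight q V S * (GkOn 0 R ↑S).edgeSet.ncard := by
        gcongr with S
        · exact bernoulliWeight_nonneg hq0 hq1 V S
        · rw [Set.ncard_eq_toFinset_card']
          exact card_le_card fun e he => Set.mem_toFinset.2 (mem_filter.1 he).2

lemma ncard_edgeSet_le [Fintype ι] (hk : 1 ≤ k) {α d : ℝ} (hα : 0 ≤ α) (hd : 0 ≤ d)
    (hedges : ∀ V : Finset ι,
      ((GkOn 0 R ↑V).edgeSet.ncard : ℝ) ≤ d / 2 * (#V : ℝ) ^ (1 + α))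
    (V : Finset ι) :
    ((GkOn k R ↑V).edgeSet.ncard : ℝ) ≤ 2 * d * k * (#V : ℝ) ^ (1 + α) := by
  classical
  set q : ℝ := (2 * k)⁻¹
  have hq0 : 0 < q := by positivity
  have hk' : (1 : ℝ) ≤ k := by exact_mod_cast hk
  have hq1 : q ≤ 1 := inv_le_one_of_one_le₀ (by linarith)
  have hqk : q * (2 * k) = 1 := inv_mul_cancel₀ (by positivity)
  have hcount := (ncard_edgeSet_mul_le_sum (k := k) (R := R) hq0.le hq1 V).trans
    (sum_bernoulliWeight_mul_le_of_le_rpow hq0.le hq1 hα (by positivity) fun S _ => hedges S)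
  set E := ((GkOn k R ↑V).edgeSet.ncard : ℝ)
  set M := (#V : ℝ) ^ (1 + α)
  have hE : E * q ≤ d * M := by
    refine le_of_mul_le_mul_right ?_ (half_pos hq0)
    calc E * q * (q / 2) = E * (q ^ 2 * (1 / 2)) := by ring
      _ ≤ E * (q ^ 2 * (1 - q) ^ k) := by gcongr; exact half_le_one_sub_inv_two_mul_pow k
      _ ≤ d / 2 * q * M := hcount
      _ = d * M * (q / 2) := by ring
  calc E = E * q * (2 * k) := by rw [mul_assoc, hqk, mul_one]
    _ ≤ d * M * (2 * k) := by gcongr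
    _ = 2 * d * k * M := by ring

lemma sum_ncard_adj_univ_le [Fintype ι] (V : Finset ι) :
    ∑ v ∈ V, {u | u ∈ V ∧ (GkOn k R Set.univ).Adj v u}.ncard ≤
      2 * (GkOn k R V).edgeSet.ncard := by
  classical
  calc ∑ v ∈ V, {u | u ∈ V ∧ (GkOn k R Set.univ).Adj v u}.ncard
      ≤ ∑ v ∈ V, (GkOn k R V).degree v := by
        refine sum_le_sum fun v hv => ?_
        rw [← SimpleGraph.card_neighborFinset_eq_degree, ← Set.ncard_coe_finset,
          SimpleGraph.coe_neighborFinset]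
        exact Set.ncard_le_ncard fun u hu => adj_of_adj_univ hu.2 hv hu.1
    _ ≤ ∑ v, (GkOn k R V).degree v := sum_le_sum_of_subset (subset_univ V)
    _ = 2 * (GkOn k R V).edgeSet.ncard := by
        rw [SimpleGraph.sum_degrees_eq_twice_card_edges, Set.ncard_eq_toFinset_card']
        rfl

end GkOn

theorem stmt3_general {ι : Type} [Fintype ι] (k : ℕ) (hk : 1 ≤ k) (α d : ℝ)
    (hα0 : 0 ≤ α) (hd : 0 < d) (R : ι → Set (ℝ × ℝ))
    (hedges : ∀ V' : Finset ι,
      (((GkOn 0 R ↑V').edgeSet).ncard : ℝ) ≤ (d / 2) * (V'.card : ℝ) ^ (1 + α)) :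
    ∀ V' : Finset ι, V'.Nonempty → ∃ v ∈ V',
      (({u | u ∈ V' ∧ (GkOn k R Set.univ).Adj v u}).ncard : ℝ)
        ≤ 4 * d * k * (V'.card : ℝ) ^ α := by
  intro V hV
  refine exists_le_of_sum_le hV ?_
  calc ∑ v ∈ V, ({u | u ∈ V ∧ (GkOn k R Set.univ).Adj v u}.ncard : ℝ)
      ≤ 2 * (GkOn k R V).edgeSet.ncard := by exact_mod_cast GkOn.sum_ncard_adj_univ_le V
    _ ≤ 2 * (2 * d * k * (#V : ℝ) ^ (1 + α)) := by
        gcongr; exact GkOn.ncard_edgeSet_le hk hα0 hd.le hedges V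
    _ = ∑ v ∈ V, 4 * d * k * (#V : ℝ) ^ α := by
        rw [sum_const, nsmul_eq_mul, Real.rpow_one_add' (by positivity) (by linarith)]; ring

theorem stmt3 {ι : Type} [Fintype ι] (k : ℕ) (hk : 1 ≤ k) (α d : ℝ)
    (hα0 : 0 ≤ α) (hα1 : α ≤ 1) (hd : 0 < d) (R : ι → Set (ℝ × ℝ))
    (hedges : ∀ V' : Finset ι,
      (((GkOn 0 R ↑V').edgeSet).ncard : ℝ) ≤ (d / 2) * (V'.card : ℝ) ^ (1 + α)) :
    ∀ V' : Finset ι, V'.Nonempty → ∃ v ∈ V',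
      (({u | u ∈ V' ∧ (GkOn k R Set.univ).Adj v u}).ncard : ℝ)
        ≤ 4 * d * k * (V'.card : ℝ) ^ α :=
  stmt3_general k hk α d hα0 hd R hedges
end

section
/- There exists an absolute constant C such that the following holds. Let R be a finite family of n ≥ 2 axis-parallel rectangles in the plane ℝ², let H = H(R) be the hypergraph induced by R, and let k ≥ 2 be an integer. Then every vertex-induced sub-hypergraph H' of H admits a k-colorful coloring with at most C·k·log n colors; that is, c_{H'}(k) = O(k·log n). -/
/-- An axis-parallel (closed) rectangle in the plane. -/
def IsAxisParallelRect (s : Set (ℝ × ℝ)) : Prop :=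
  ∃ a b c d : ℝ, a ≤ b ∧ c ≤ d ∧ s = Set.Icc a b ×ˢ Set.Icc c d

open Finset
open scoped Classical

section TopK

variable {ι β : Type*} [LinearOrder β] {F G : Finset ι} {ρ : ι → β} {k : ℕ} {i j : ι}

def higher (F : Finset ι) (ρ : ι → β) (i : ι) : Finset ι := {j ∈ F | ρ i < ρ j}

def topK (F : Finset ι) (ρ : ι → β) (k : ℕ) : Finset ι := {i ∈ F | #(higher F ρ i) < k}

lemma card_higher_lt_card_higher (hj : j ∈ F) (h : ρ i < ρ j) :
    #(higher F ρ j) < #(higher F ρ i) := by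
  refine card_lt_card ⟨fun l hl => ?_, fun hsub => ?_⟩
  · simp only [higher, mem_filter] at hl ⊢
    exact ⟨hl.1, h.trans hl.2⟩
  · exact lt_irrefl _ (mem_filter.1 (hsub (mem_filter.2 ⟨hj, h⟩))).2

lemma injOn_card_higher (hρ : Set.InjOn ρ F) : Set.InjOn (fun i => #(higher F ρ i)) F := by
  intro i hi j hj hij
  by_contra hne
  rcases lt_or_gt_of_ne (hρ.ne hi hj hne) with h | h
  · exact (card_higher_lt_card_higher hj h).ne' hij
  · exact (card_higher_lt_card_higher hi h).ne hij

lemma card_higher_lt_card (hi : i ∈ F) : #(higher F ρ i) < #F :=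
  card_lt_card ⟨filter_subset _ _, fun h => lt_irrefl _ (mem_filter.1 (h hi)).2⟩

lemma image_card_higher (hρ : Set.InjOn ρ F) : F.image (fun i => #(higher F ρ i)) = range #F :=
  eq_of_subset_of_card_le (fun _ hn => by
      obtain ⟨i, hi, rfl⟩ := mem_image.1 hn
      exact mem_range.2 (card_higher_lt_card hi))
    (by rw [card_range, card_image_of_injOn (injOn_card_higher hρ)])

lemma card_topK (hρ : Set.InjOn ρ F) : #(topK F ρ k) = min #F k := by
  have hinj := (injOn_card_higher hρ).mono
    (coe_subset.2 (filter_subset (fun i => #(higher F ρ i) < k) F))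
  rw [topK, ← card_image_of_injOn hinj, ← filter_image (p := (· < k)), image_card_higher hρ,
    ← card_range (min _ _)]
  congr 1
  ext n
  simp only [mem_filter, mem_range, lt_min_iff]

lemma card_topK_le (hρ : Set.InjOn ρ F) : #(topK F ρ k) ≤ k :=
  (card_topK hρ).trans_le (min_le_right _ _)

lemma mem_topK_of_subset (hGF : G ⊆ F) (hi : i ∈ G) (h : i ∈ topK F ρ k) :
    i ∈ topK G ρ k :=
  mem_filter.2 ⟨hi, (card_le_card (filter_subset_filter _ hGF)).trans_lt (mem_filter.1 h).2⟩

lemma mem_topK_of_upward (hGF : G ⊆ F) (hG : ∀ i ∈ G, ∀ j ∈ F, ρ i < ρ j → j ∈ G)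
    (h : i ∈ topK G ρ k) : i ∈ topK F ρ k := by
  obtain ⟨hi, hk⟩ := mem_filter.1 h
  refine mem_filter.2 ⟨hGF hi, (card_le_card fun j hj => ?_).trans_lt hk⟩
  obtain ⟨hjF, hij⟩ := mem_filter.1 hj
  exact mem_filter.2 ⟨hG i hi j hjF hij, hij⟩

lemma min_card_le_card_topK_fiber [DecidableEq ι] {γ : Type*} [DecidableEq γ] (E : Finset ι)
    (κ : ι → γ) (σ : γ → ι → β) (hσ : ∀ c, Set.InjOn (σ c) E) (k : ℕ) :
    min #E k ≤ #{i ∈ E | i ∈ topK {j ∈ E | κ j = κ i} (σ (κ i)) k} := by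
  by_cases hbig : ∃ i ∈ E, k ≤ #{j ∈ E | κ j = κ i}
  · obtain ⟨i, -, hk⟩ := hbig
    have hinj := (hσ (κ i)).mono (coe_subset.2 (filter_subset (fun j => κ j = κ i) E))
    calc min #E k ≤ k := min_le_right _ _
      _ = #(topK {j ∈ E | κ j = κ i} (σ (κ i)) k) := by rw [card_topK hinj, min_eq_right hk]
      _ ≤ _ := card_le_card fun j hj => by
        obtain ⟨hjE, hjκ⟩ := mem_filter.1 (mem_filter.1 hj).1
        rw [← hjκ] at hj
        exact mem_filter.2 ⟨hjE, hj⟩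
  · push Not at hbig
    refine (min_le_left _ _).trans (card_le_card fun i hi => mem_filter.2 ⟨hi, ?_⟩)
    have hiκ : i ∈ {j ∈ E | κ j = κ i} := mem_filter.2 ⟨hi, rfl⟩
    exact mem_filter.2 ⟨hiκ, (card_higher_lt_card hiκ).trans (hbig i hi)⟩

end TopK

lemma sum_card_filter_ne_le_two_mul {ι β : Type*} [DecidableEq ι] [LinearOrder β]
    {F : Finset ι} {ρ : ι → β} (hρ : Set.InjOn ρ F) {r : ι → ι → Prop}
    (hr : ∀ i j, r i j → r j i) :
    ∑ i ∈ F, #{j ∈ F | j ≠ i ∧ r i j} ≤ 2 * ∑ i ∈ F, #{j ∈ F | ρ i < ρ j ∧ r i j} := by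
  have hswap :
      ∑ i ∈ F, #{j ∈ F | ρ j < ρ i ∧ r i j} = ∑ i ∈ F, #{j ∈ F | ρ i < ρ j ∧ r i j} := by
    refine (sum_card_bipartiteAbove_eq_sum_card_bipartiteBelow
      (fun i j => ρ j < ρ i ∧ r i j)).trans ?_
    refine sum_congr rfl fun j _ => congrArg card (filter_congr fun i _ => ?_)
    exact and_congr_right fun _ => ⟨hr i j, hr j i⟩
  calc ∑ i ∈ F, #{j ∈ F | j ≠ i ∧ r i j}
      ≤ ∑ i ∈ F, (#{j ∈ F | ρ i < ρ j ∧ r i j} + #{j ∈ F | ρ j < ρ i ∧ r i j}) := by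
        refine sum_le_sum fun i hi => (card_le_card fun j hj => ?_).trans (card_union_le _ _)
        obtain ⟨hj, hne, hij⟩ := mem_filter.1 hj
        rcases lt_or_gt_of_ne (hρ.ne hi hj (Ne.symm hne)) with h | h
        · exact mem_union_left _ (mem_filter.2 ⟨hj, h, hij⟩)
        · exact mem_union_right _ (mem_filter.2 ⟨hj, h, hij⟩)
    _ = 2 * ∑ i ∈ F, #{j ∈ F | ρ i < ρ j ∧ r i j} := by
        rw [sum_add_distrib, hswap, two_mul]

section Intervals

variable {ι β : Type*} [LinearOrder β] (F : Finset ι) (ρ : ι → β) (lo hi : ι → ℕ) (k : ℕ)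

def stabbed (t : ℕ) : Finset ι := {j ∈ F | lo j ≤ t ∧ t ≤ hi j}

def topAt (t : ℕ) : Finset ι := topK (stabbed F lo hi t) ρ k

def JointlyTop (i j : ι) : Prop := ∃ t, i ∈ topAt F ρ lo hi k t ∧ j ∈ topAt F ρ lo hi k t

/-- `t` starts a maximal run of points at which `i` is in the top `k`. -/
def IsEntry (i : ι) (t : ℕ) : Prop :=
  i ∈ topAt F ρ lo hi k t ∧ (t = lo i ∨ i ∉ topAt F ρ lo hi k (t - 1))

noncomputable def entries (i : ι) : Finset ℕ :=
  {t ∈ Icc (lo i) (hi i) | IsEntry F ρ lo hi k i t}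

variable {F ρ lo hi k} {i j : ι} {t : ℕ}

lemma mem_stabbed : j ∈ stabbed F lo hi t ↔ j ∈ F ∧ lo j ≤ t ∧ t ≤ hi j := mem_filter

lemma mem_stabbed_of_mem_topAt (h : i ∈ topAt F ρ lo hi k t) : i ∈ stabbed F lo hi t :=
  (mem_filter.1 h).1

lemma mem_topAt_of_subset {G : Finset ι} (hGF : G ⊆ F) (hiG : i ∈ G)
    (h : i ∈ topAt F ρ lo hi k t) : i ∈ topAt G ρ lo hi k t :=
  mem_topK_of_subset (filter_subset_filter _ hGF)
    (mem_stabbed.2 ⟨hiG, (mem_stabbed.1 (mem_stabbed_of_mem_topAt h)).2⟩) h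

lemma JointlyTop.symm (h : JointlyTop F ρ lo hi k i j) : JointlyTop F ρ lo hi k j i :=
  let ⟨t, hit, hjt⟩ := h; ⟨t, hjt, hit⟩

lemma JointlyTop.mono {G : Finset ι} (hGF : G ⊆ F) (hiG : i ∈ G) (hjG : j ∈ G)
    (h : JointlyTop F ρ lo hi k i j) : JointlyTop G ρ lo hi k i j :=
  let ⟨t, hit, hjt⟩ := h
  ⟨t, mem_topAt_of_subset hGF hiG hit, mem_topAt_of_subset hGF hjG hjt⟩

lemma mem_entries : t ∈ entries F ρ lo hi k i ↔ IsEntry F ρ lo hi k i t := by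
  refine mem_filter.trans ⟨fun h => h.2, fun h => ⟨mem_Icc.2 ?_, h⟩⟩
  exact (mem_stabbed.1 (mem_stabbed_of_mem_topAt h.1)).2

lemma exists_isEntry_le (h : i ∈ topAt F ρ lo hi k t) :
    ∃ m ≤ t, IsEntry F ρ lo hi k i m ∧ ∀ u ∈ Icc m t, i ∈ topAt F ρ lo hi k u := by
  induction t with
  | zero =>
    have hlo : 0 = lo i := by have := (mem_stabbed.1 (mem_stabbed_of_mem_topAt h)).2.1; omega
    refine ⟨0, le_rfl, ⟨h, Or.inl hlo⟩, fun u hu => ?_⟩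
    obtain rfl : u = 0 := by simp only [mem_Icc] at hu; omega
    exact h
  | succ t ih =>
    by_cases hent : IsEntry F ρ lo hi k i (t + 1)
    · refine ⟨t + 1, le_rfl, hent, fun u hu => ?_⟩
      obtain rfl : u = t + 1 := by simp only [mem_Icc] at hu; omega
      exact h
    · simp only [IsEntry, h, true_and, not_or, not_not, Nat.add_sub_cancel] at hent
      obtain ⟨m, hmt, hm, hrun⟩ := ih hent.2
      refine ⟨m, by omega, hm, fun u hu => ?_⟩
      rw [mem_Icc] at hu
      rcases Nat.lt_or_ge u (t + 1) with hut | hut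
      · exact hrun u (mem_Icc.2 ⟨hu.1, by omega⟩)
      · obtain rfl : u = t + 1 := by omega
        exact h

lemma card_jointlyTop_higher_le [DecidableEq ι] (i : ι) :
    #{j ∈ F | ρ i < ρ j ∧ JointlyTop F ρ lo hi k i j}
      ≤ #{j ∈ F | i ∈ topAt F ρ lo hi k (lo j)} + #(entries F ρ lo hi k i) * k := by
  have hsub : {j ∈ F | ρ i < ρ j ∧ JointlyTop F ρ lo hi k i j}
      ⊆ {j ∈ F | i ∈ topAt F ρ lo hi k (lo j)}
        ∪ (entries F ρ lo hi k i).biUnion fun m => higher (stabbed F lo hi m) ρ i := by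
    intro j hj
    obtain ⟨hjF, hij, t, hit, hjt⟩ := mem_filter.1 hj
    obtain ⟨-, hjt₁, hjt₂⟩ := mem_stabbed.1 (mem_stabbed_of_mem_topAt hjt)
    obtain ⟨m, hmt, hm, hrun⟩ := exists_isEntry_le hit
    rcases le_or_gt m (lo j) with hmj | hmj
    · exact mem_union_left _ (mem_filter.2 ⟨hjF, hrun _ (mem_Icc.2 ⟨hmj, hjt₁⟩)⟩)
    · refine mem_union_right _ (mem_biUnion.2 ⟨m, mem_entries.2 hm, mem_filter.2 ⟨?_, hij⟩⟩)
      exact mem_stabbed.2 ⟨hjF, hmj.le, hmt.trans hjt₂⟩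
  calc _ ≤ _ := card_le_card hsub
    _ ≤ _ := card_union_le _ _
    _ ≤ _ := by
      gcongr
      exact card_biUnion_le_card_mul _ _ _ fun m hm => (mem_filter.1 (mem_entries.1 hm).1).2.le

lemma sum_card_topAt_lo_le [DecidableEq ι] (hρ : Set.InjOn ρ F) :
    ∑ i ∈ F, #{j ∈ F | i ∈ topAt F ρ lo hi k (lo j)} ≤ k * #F := by
  refine (sum_card_bipartiteAbove_eq_sum_card_bipartiteBelow
    (fun i j => i ∈ topAt F ρ lo hi k (lo j))).trans_le ?_
  rw [mul_comm, ← smul_eq_mul, ← sum_const]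
  refine sum_le_sum fun j _ => (card_le_card fun i hiF => (mem_filter.1 hiF).2).trans ?_
  exact card_topK_le (hρ.mono (coe_subset.2 (filter_subset _ F)))

lemma card_higher_stabbed_pred_le (t : ℕ) (i : ι) :
    #(higher (stabbed F lo hi (t - 1)) ρ i)
      ≤ #(higher (stabbed F lo hi t) ρ i) + #{j ∈ F | hi j + 1 = t} := by
  refine (card_le_card fun j hj => ?_).trans (card_union_le _ _)
  obtain ⟨hjG, hij⟩ := mem_filter.1 hj
  obtain ⟨hjF, hj₁, hj₂⟩ := mem_stabbed.1 hjG
  by_cases hjt : t ≤ hi j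
  · exact mem_union_left _ (mem_filter.2 ⟨mem_stabbed.2 ⟨hjF, by omega, hjt⟩, hij⟩)
  · exact mem_union_right _ (mem_filter.2 ⟨hjF, by omega⟩)

/-- The members re-entering the top `k` at `t` have pairwise distinct numbers of higher members,
all in `[k - e, k)` where `e` is the number of intervals ending at `t - 1`. -/
lemma card_reentries_le [DecidableEq ι] (hρ : Set.InjOn ρ F) (t : ℕ) :
    #{i ∈ F | lo i < t ∧ i ∈ topAt F ρ lo hi k t ∧ i ∉ topAt F ρ lo hi k (t - 1)}
      ≤ #{j ∈ F | hi j + 1 = t} := by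
  set e := #{j ∈ F | hi j + 1 = t}
  set R := {i ∈ F | lo i < t ∧ i ∈ topAt F ρ lo hi k t ∧ i ∉ topAt F ρ lo hi k (t - 1)}
  have hRG : (R : Set ι) ⊆ stabbed F lo hi t := fun i hiR =>
    mem_stabbed_of_mem_topAt (mem_filter.1 hiR).2.2.1
  have hmaps : Set.MapsTo (fun i => #(higher (stabbed F lo hi t) ρ i)) R (Ico (k - e) k) := by
    intro i hiR
    obtain ⟨hiF, hlo, hit, hit'⟩ := mem_filter.1 hiR
    have hiG' : i ∈ stabbed F lo hi (t - 1) := by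
      have := (mem_stabbed.1 (mem_stabbed_of_mem_topAt hit)).2.2
      exact mem_stabbed.2 ⟨hiF, by omega, by omega⟩
    have hk : k ≤ #(higher (stabbed F lo hi (t - 1)) ρ i) :=
      not_lt.1 fun h => hit' (mem_filter.2 ⟨hiG', h⟩)
    have := card_higher_stabbed_pred_le (F := F) (ρ := ρ) (lo := lo) (hi := hi) t i
    have := (mem_filter.1 hit).2
    simp only [coe_Ico, Set.mem_Ico]
    omega
  have hinj := (injOn_card_higher (hρ.mono (coe_subset.2 (filter_subset _ F)))).mono hRG
  calc #R ≤ #(Ico (k - e) k) := card_le_card_of_injOn _ hmaps hinj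
    _ ≤ e := by rw [Nat.card_Ico]; omega

lemma sum_card_entries_le [DecidableEq ι] (hρ : Set.InjOn ρ F) :
    ∑ i ∈ F, #(entries F ρ lo hi k i) ≤ 2 * #F := by
  set R := fun i => {t ∈ entries F ρ lo hi k i | lo i < t}
  have hR : ∀ i, #(entries F ρ lo hi k i) ≤ #(R i) + 1 := fun i =>
    (card_le_card fun t ht => by
      refine mem_insert.2 ((eq_or_ne t (lo i)).imp id fun h => mem_filter.2 ⟨ht, ?_⟩)
      have := (mem_stabbed.1 (mem_stabbed_of_mem_topAt (mem_entries.1 ht).1)).2.1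
      omega).trans (card_insert_le _ _)
  have hreentry : ∀ t, #{i ∈ F | t ∈ R i} ≤ #{j ∈ F | hi j + 1 = t} := fun t =>
    (card_le_card fun i hiR => by
      obtain ⟨hiF, hent, hlo⟩ := by simpa only [R, mem_filter] using hiR
      obtain ⟨hit, hor⟩ := mem_entries.1 hent
      exact mem_filter.2 ⟨hiF, hlo, hit, hor.resolve_left hlo.ne'⟩).trans
      (card_reentries_le hρ t)
  set T := F.biUnion R
  have hswap : ∑ i ∈ F, #(R i) = ∑ t ∈ T, #{i ∈ F | t ∈ R i} := by
    simp only [card_eq_sum_ones]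
    exact sum_comm' fun i t => by simp only [T, mem_filter, mem_biUnion]; grind
  calc ∑ i ∈ F, #(entries F ρ lo hi k i)
      ≤ ∑ i ∈ F, (#(R i) + 1) := sum_le_sum fun i _ => hR i
    _ = ∑ t ∈ T, #{i ∈ F | t ∈ R i} + #F := by
      rw [sum_add_distrib, hswap, sum_const, smul_eq_mul, mul_one]
    _ ≤ #{j ∈ F | hi j + 1 ∈ T} + #F := by
      rw [← sum_card_fiberwise_eq_card_filter]
      exact Nat.add_le_add_right (sum_le_sum fun t _ => hreentry t) _
    _ ≤ 2 * #F := by rw [two_mul]; exact Nat.add_le_add_right (card_filter_le _ _) _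

lemma sum_card_jointlyTop_le [DecidableEq ι] (hρ : Set.InjOn ρ F) :
    ∑ i ∈ F, #{j ∈ F | j ≠ i ∧ JointlyTop F ρ lo hi k i j} ≤ 6 * k * #F :=
  calc ∑ i ∈ F, #{j ∈ F | j ≠ i ∧ JointlyTop F ρ lo hi k i j}
      ≤ 2 * ∑ i ∈ F, #{j ∈ F | ρ i < ρ j ∧ JointlyTop F ρ lo hi k i j} :=
        sum_card_filter_ne_le_two_mul (r := JointlyTop F ρ lo hi k) hρ
          fun _ _ => JointlyTop.symm
    _ ≤ 2 * ∑ i ∈ F,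
          (#{j ∈ F | i ∈ topAt F ρ lo hi k (lo j)} + #(entries F ρ lo hi k i) * k) := by
        gcongr with i; exact card_jointlyTop_higher_le i
    _ ≤ 2 * (k * #F + 2 * #F * k) := by
        rw [sum_add_distrib, ← sum_mul]
        gcongr
        · exact sum_card_topAt_lo_le hρ
        · exact sum_card_entries_le hρ
    _ = 6 * k * #F := by ring

end Intervals

lemma exists_coloring_of_forall_exists_card_le {ι : Type*} [DecidableEq ι]
    {r : ι → ι → Prop} (hr : ∀ i j, r i j → r j i) {d : ℕ} (V : Finset ι)
    (hV : ∀ S ⊆ V, S.Nonempty → ∃ v ∈ S, #{j ∈ S | j ≠ v ∧ r v j} ≤ d) :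
    ∃ ψ : ι → Fin (d + 1), ∀ i ∈ V, ∀ j ∈ V, i ≠ j → r i j → ψ i ≠ ψ j := by
  induction V using Finset.strongInduction with
  | H V ih =>
  rcases V.eq_empty_or_nonempty with rfl | hne
  · exact ⟨0, by simp⟩
  obtain ⟨v, hv, hdeg⟩ := hV V subset_rfl hne
  obtain ⟨ψ, hψ⟩ := ih (V.erase v) (erase_ssubset hv)
    fun S hS => hV S (hS.trans (erase_subset _ _))
  obtain ⟨c, -, hc⟩ := exists_mem_notMem_of_card_lt_card
    (s := {j ∈ V | j ≠ v ∧ r v j}.image ψ) (t := (univ : Finset (Fin (d + 1))))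
    (by simpa using card_image_le.trans_lt (Nat.lt_succ_of_le hdeg))
  refine ⟨Function.update ψ v c, fun i hi j hj hij hrij => ?_⟩
  by_cases hiv : i = v
  · subst hiv
    rw [Function.update_self, Function.update_of_ne (Ne.symm hij)]
    exact fun h => hc (mem_image.2 ⟨j, mem_filter.2 ⟨hj, Ne.symm hij, hrij⟩, h.symm⟩)
  by_cases hjv : j = v
  · subst hjv
    rw [Function.update_self, Function.update_of_ne hij]
    exact fun h => hc (mem_image.2 ⟨i, mem_filter.2 ⟨hi, hij, hr _ _ hrij⟩, h⟩)
  rw [Function.update_of_ne hiv, Function.update_of_ne hjv]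
  exact hψ i (mem_erase.2 ⟨hiv, hi⟩) j (mem_erase.2 ⟨hjv, hj⟩) hij hrij

lemma exists_padicValNat_two_gt {s t : ℕ} (hs : 0 < s) (hst : s < t)
    (h : padicValNat 2 s = padicValNat 2 t) :
    ∃ z, s < z ∧ z ≤ t ∧ padicValNat 2 s < padicValNat 2 z := by
  have hs2 : 2 ^ padicValNat 2 s ∣ s := pow_padicValNat_dvd
  have hs2' : ¬ 2 ^ (padicValNat 2 s + 1) ∣ s := pow_succ_padicValNat_not_dvd hs.ne'
  have ht2 : 2 ^ padicValNat 2 s ∣ t := h ▸ pow_padicValNat_dvd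
  generalize padicValNat 2 s = v at hs2 hs2' ht2 ⊢
  obtain ⟨o, rfl⟩ := hs2
  have hodd : ¬ 2 ∣ o := fun ⟨q, hq⟩ => hs2' ⟨q, by rw [hq, pow_succ, mul_assoc]⟩
  have hgap : 2 ^ v * o + 2 ^ v ≤ t := by
    have := Nat.le_of_dvd (by omega) (Nat.dvd_sub ht2 (dvd_mul_right _ o))
    omega
  obtain ⟨q, hq⟩ : 2 ∣ o + 1 := by omega
  have hdvd : 2 ^ (v + 1) ∣ 2 ^ v * o + 2 ^ v := ⟨q, by rw [pow_succ, mul_assoc, ← hq]; ring⟩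
  exact ⟨_, Nat.lt_add_of_pos_right (by positivity), hgap,
    (padicValNat_dvd_iff_le (a := 2 ^ v * o + 2 ^ v) (by positivity)).1 hdvd⟩

lemma eq_of_forall_padicValNat_two_le {I J : Set ℕ} (hI : I.OrdConnected)
    (hJ : J.OrdConnected) {x s t : ℕ} (hxI : x ∈ I) (hxJ : x ∈ J) (hsI : s ∈ I) (htJ : t ∈ J)
    (hs : 0 < s) (ht : 0 < t) (hsmax : ∀ z ∈ I, padicValNat 2 z ≤ padicValNat 2 s)
    (htmax : ∀ z ∈ J, padicValNat 2 z ≤ padicValNat 2 t)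
    (h : padicValNat 2 s = padicValNat 2 t) : s = t := by
  wlog hst : s < t generalizing I J s t
  · rcases (not_lt.1 hst).lt_or_eq with hts | hts
    · exact (this hJ hI hxJ hxI htJ hsI ht hs htmax hsmax h.symm hts).symm
    · exact hts.symm
  obtain ⟨z, hsz, hzt, hv⟩ := exists_padicValNat_two_gt hs hst h
  rcases le_or_gt z x with hzx | hxz
  · exact absurd (hsmax z (hI.out hsI hxI ⟨hsz.le, hzx⟩)) (not_le.2 hv)
  · exact absurd (htmax z (hJ.out hxJ htJ ⟨hxz.le, hzt⟩)) (not_le.2 (h ▸ hv))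

section Compress

variable {α : Type*} [LinearOrder α] {s : Finset α} {v w x : α}

/-- Counting both `≤ x` and `< x` makes `compress s` jump when `x` passes a point of `s` from
either side, so comparisons with points of `s` survive the compression exactly. -/
def compress (s : Finset α) (x : α) : ℕ := #{u ∈ s | u ≤ x} + #{u ∈ s | u < x}

lemma compress_mono : Monotone (compress s) := fun _ _ h =>
  add_le_add
    (card_le_card fun _ hu => mem_filter.2 ⟨(mem_filter.1 hu).1, (mem_filter.1 hu).2.trans h⟩)
    (card_le_card fun _ hu => mem_filter.2 ⟨(mem_filter.1 hu).1, (mem_filter.1 hu).2.trans_le h⟩)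

lemma compress_lt_compress_of_mem_right (hv : v ∈ s) (h : x < v) :
    compress s x < compress s v := by
  have hle : #{u ∈ s | u ≤ x} < #{u ∈ s | u ≤ v} := card_lt_card
    ⟨fun _ hu => mem_filter.2 ⟨(mem_filter.1 hu).1, (mem_filter.1 hu).2.trans h.le⟩,
      fun hsub => (mem_filter.1 (hsub (mem_filter.2 ⟨hv, le_rfl⟩))).2.not_gt h⟩
  have hlt : #{u ∈ s | u < x} ≤ #{u ∈ s | u < v} :=
    card_le_card fun _ hu => mem_filter.2 ⟨(mem_filter.1 hu).1, (mem_filter.1 hu).2.trans h⟩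
  exact Nat.add_lt_add_of_lt_of_le hle hlt

lemma compress_lt_compress_of_mem_left (hw : w ∈ s) (h : w < x) :
    compress s w < compress s x := by
  have hle : #{u ∈ s | u ≤ w} ≤ #{u ∈ s | u ≤ x} :=
    card_le_card fun _ hu => mem_filter.2 ⟨(mem_filter.1 hu).1, (mem_filter.1 hu).2.trans h.le⟩
  have hlt : #{u ∈ s | u < w} < #{u ∈ s | u < x} := card_lt_card
    ⟨fun _ hu => mem_filter.2 ⟨(mem_filter.1 hu).1, (mem_filter.1 hu).2.trans h⟩,
      fun hsub => lt_irrefl w (mem_filter.1 (hsub (mem_filter.2 ⟨hw, h⟩))).2⟩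
  exact Nat.add_lt_add_of_le_of_lt hle hlt

lemma mem_Icc_iff_compress (hv : v ∈ s) (hw : w ∈ s) :
    x ∈ Set.Icc v w ↔ compress s v ≤ compress s x ∧ compress s x ≤ compress s w :=
  ⟨fun h => ⟨compress_mono h.1, compress_mono h.2⟩, fun h =>
    ⟨not_lt.1 fun hxv => (compress_lt_compress_of_mem_right hv hxv).not_ge h.1,
      not_lt.1 fun hwx => (compress_lt_compress_of_mem_left hw hwx).not_ge h.2⟩⟩

lemma compress_le_two_mul_card : compress s x ≤ 2 * #s := by
  have := card_filter_le s (· ≤ x)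
  have := card_filter_le s (· < x)
  unfold compress
  omega

end Compress

section NatRectangles

variable {ι : Type*} (V : Finset ι) (lo hi ylo yhi : ι → ℕ)

def rectsAt (X Y : ℕ) : Finset ι := {i ∈ V | (lo i ≤ X ∧ X ≤ hi i) ∧ ylo i ≤ Y ∧ Y ≤ yhi i}

/-- Priority of a rectangle of a node, seen from a point to the right (`true`) or to the left
(`false`) of the node's vertical line: the farther it reaches towards the point, the higher. -/
def prio (right : Bool) (i : ι) : ℤ ×ₗ ι :=
  toLex (if right then (hi i : ℤ) else -(lo i : ℤ), i)

variable {V lo hi ylo yhi}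

lemma prio_injective (r : Bool) : Function.Injective (prio lo hi r) := fun i j h => by
  simpa [prio] using congrArg (fun p => (ofLex p).2) h

lemma cen_eq_of_mem_rectsAt {cen : ι → ℕ} (hcen : ∀ i, cen i ∈ Set.Icc (lo i) (hi i))
    (hlo : ∀ i, 0 < lo i)
    (hmax : ∀ i, ∀ z ∈ Set.Icc (lo i) (hi i), padicValNat 2 z ≤ padicValNat 2 (cen i))
    {X Y : ℕ} {u v : ι} (hu : u ∈ rectsAt V lo hi ylo yhi X Y)
    (hv : v ∈ rectsAt V lo hi ylo yhi X Y)
    (h : padicValNat 2 (cen u) = padicValNat 2 (cen v)) : cen u = cen v :=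
  eq_of_forall_padicValNat_two_le Set.ordConnected_Icc Set.ordConnected_Icc
    (mem_filter.1 hu).2.1 (mem_filter.1 hv).2.1 (hcen u) (hcen v)
    ((hlo u).trans_le (hcen u).1) ((hlo v).trans_le (hcen v).1) (hmax u) (hmax v) h

end NatRectangles

section NodeConflicts

variable {ι : Type*} [LinearOrder ι] (V : Finset ι) (lo hi ylo yhi cen : ι → ℕ) (k : ℕ)

def RectConflict (i j : ι) : Prop :=
  cen i = cen j ∧ ∃ r, JointlyTop {l ∈ V | cen l = cen i} (prio lo hi r) ylo yhi k i j

variable {V lo hi ylo yhi cen k}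

lemma hi_le_of_prio_lt {i j : ι} (h : prio lo hi true i < prio lo hi true j) :
    hi i ≤ hi j := by
  have := Prod.Lex.toLex_lt_toLex.1 h
  simp only [if_true, Nat.cast_lt, Nat.cast_inj] at this
  omega

lemma lo_le_of_prio_lt {i j : ι} (h : prio lo hi false i < prio lo hi false j) :
    lo j ≤ lo i := by
  have := Prod.Lex.toLex_lt_toLex.1 h
  simp only [Bool.false_eq_true, if_false, neg_lt_neg_iff, Nat.cast_lt, neg_inj,
    Nat.cast_inj] at this
  omega

lemma RectConflict.symm {i j : ι} (h : RectConflict V lo hi ylo yhi cen k i j) :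
    RectConflict V lo hi ylo yhi cen k j i := by
  obtain ⟨hij, r, h⟩ := h
  refine ⟨hij.symm, r, ?_⟩
  simp only [← hij]
  exact h.symm

lemma exists_card_rectConflict_le {S : Finset ι} (hSV : S ⊆ V) (hS : S.Nonempty) :
    ∃ v ∈ S, #{j ∈ S | j ≠ v ∧ RectConflict V lo hi ylo yhi cen k v j} ≤ 12 * k := by
  obtain ⟨i₀, hi₀⟩ := hS
  set S₀ := {j ∈ S | cen j = cen i₀}
  have hsum :
      ∑ i ∈ S₀, #{j ∈ S₀ | j ≠ i ∧ ∃ r, JointlyTop S₀ (prio lo hi r) ylo yhi k i j}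
        ≤ ∑ i ∈ S₀, 12 * k :=
    calc _ ≤ ∑ i ∈ S₀, (#{j ∈ S₀ | j ≠ i ∧ JointlyTop S₀ (prio lo hi true) ylo yhi k i j}
          + #{j ∈ S₀ | j ≠ i ∧ JointlyTop S₀ (prio lo hi false) ylo yhi k i j}) := by
          refine sum_le_sum fun i _ => (card_le_card fun j hj => ?_).trans (card_union_le _ _)
          obtain ⟨hj, hji, r, hr⟩ := mem_filter.1 hj
          cases r
          · exact mem_union_right _ (mem_filter.2 ⟨hj, hji, hr⟩)
          · exact mem_union_left _ (mem_filter.2 ⟨hj, hji, hr⟩)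
      _ ≤ 6 * k * #S₀ + 6 * k * #S₀ := by
          rw [sum_add_distrib]
          gcongr <;> exact sum_card_jointlyTop_le (prio_injective _).injOn
      _ = ∑ i ∈ S₀, 12 * k := by rw [sum_const, smul_eq_mul]; ring
  obtain ⟨v, hv, hdeg⟩ :=
    exists_le_of_sum_le (⟨i₀, mem_filter.2 ⟨hi₀, rfl⟩⟩ : S₀.Nonempty) hsum
  obtain ⟨hvS, hv₀⟩ := mem_filter.1 hv
  refine ⟨v, hvS, (card_le_card fun j hj => ?_).trans hdeg⟩
  obtain ⟨hjS, hjv, hcen, r, hr⟩ := mem_filter.1 hj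
  have hjS₀ : j ∈ S₀ := mem_filter.2 ⟨hjS, hcen.symm.trans hv₀⟩
  have hnode : S₀ ⊆ {l ∈ V | cen l = cen v} := fun l hl =>
    mem_filter.2 ⟨hSV (mem_filter.1 hl).1, (mem_filter.1 hl).2.trans hv₀.symm⟩
  exact mem_filter.2 ⟨hjS₀, hjv, r, hr.mono hnode hv hjS₀⟩

/-- Within a node all rectangles meet the vertical line through the centre, so on the side of the
point those containing it form an up-set for the matching priority. -/
lemma mem_topAt_of_mem_topK_rectsAt (hcen : ∀ i, cen i ∈ Set.Icc (lo i) (hi i)) {X Y : ℕ}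
    {u : ι} (hu : u ∈ topK {j ∈ rectsAt V lo hi ylo yhi X Y | cen j = cen u}
      (prio lo hi (decide (cen u ≤ X))) k) :
    u ∈ topAt {j ∈ V | cen j = cen u} (prio lo hi (decide (cen u ≤ X))) ylo yhi k Y := by
  refine mem_topK_of_upward (fun j hj => ?_) (fun i hiG j hj hij => ?_) hu
  · obtain ⟨hjE, hjc⟩ := mem_filter.1 hj
    obtain ⟨hjV, -, hjY⟩ := mem_filter.1 hjE
    exact mem_stabbed.2 ⟨mem_filter.2 ⟨hjV, hjc⟩, hjY⟩
  · obtain ⟨hiE, hic⟩ := mem_filter.1 hiG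
    obtain ⟨-, hiX, -⟩ := mem_filter.1 hiE
    obtain ⟨hjN, hjY₁, hjY₂⟩ := mem_stabbed.1 hj
    obtain ⟨hjV, hjc⟩ := mem_filter.1 hjN
    obtain ⟨hj₁, hj₂⟩ := hcen j
    have hjX : lo j ≤ X ∧ X ≤ hi j := by
      by_cases hside : cen u ≤ X
      · simp only [hside, decide_true] at hij
        have := hi_le_of_prio_lt hij
        omega
      · simp only [hside, decide_false] at hij
        have := lo_le_of_prio_lt hij
        omega
    exact mem_filter.2 ⟨mem_filter.2 ⟨hjV, hjX, hjY₁, hjY₂⟩, hjc⟩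

end NodeConflicts

theorem exists_colorful_coloring_rectsAt {ι : Type*} [LinearOrder ι] (V : Finset ι)
    (lo hi ylo yhi : ι → ℕ) {N : ℕ} (hlo : ∀ i, 0 < lo i) (hle : ∀ i, lo i ≤ hi i)
    (hN : ∀ i, hi i ≤ N) (k : ℕ) :
    ∃ φ : ι → Fin ((Nat.log 2 N + 1) * (12 * k + 1)), ∀ X Y : ℕ,
      ∃ S ⊆ rectsAt V lo hi ylo yhi X Y, min #(rectsAt V lo hi ylo yhi X Y) k ≤ #S ∧
        Set.InjOn φ S := by
  choose cen hcen hmax using fun i => (Set.Icc (lo i) (hi i)).exists_max_image (padicValNat 2)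
    (Set.finite_Icc _ _) (Set.nonempty_Icc.2 (hle i))
  obtain ⟨ψ, hψ⟩ := exists_coloring_of_forall_exists_card_le
    (r := RectConflict V lo hi ylo yhi cen k) (fun _ _ => RectConflict.symm) V
    fun _ hSV hS => exists_card_rectConflict_le hSV hS
  have hlevel : ∀ i, padicValNat 2 (cen i) < Nat.log 2 N + 1 := fun i => Nat.lt_succ_of_le
    ((padicValNat_le_nat_log _).trans (Nat.log_mono_right ((hcen i).2.trans (hN i))))
  refine ⟨fun i => finProdFinEquiv (⟨padicValNat 2 (cen i), hlevel i⟩, ψ i), fun X Y => ?_⟩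
  set E := rectsAt V lo hi ylo yhi X Y
  refine ⟨_, filter_subset _ E, min_card_le_card_topK_fiber E cen
    (fun c => prio lo hi (decide (c ≤ X))) (fun _ => (prio_injective _).injOn) k, ?_⟩
  intro u hu v hv huv
  obtain ⟨huE, hutop⟩ := mem_filter.1 hu
  obtain ⟨hvE, hvtop⟩ := mem_filter.1 hv
  obtain ⟨hlev, hψuv⟩ := Prod.ext_iff.1 (finProdFinEquiv.injective huv)
  have hcuv := cen_eq_of_mem_rectsAt hcen hlo hmax huE hvE (Fin.mk.inj_iff.1 hlev)
  have hv' := mem_topAt_of_mem_topK_rectsAt hcen hvtop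
  simp only [← hcuv] at hv'
  by_contra hne
  exact hψ u (mem_filter.1 huE).1 v (mem_filter.1 hvE).1 hne
    ⟨hcuv, _, Y, mem_topAt_of_mem_topK_rectsAt hcen hutop, hv'⟩ hψuv

lemma hyperedge_inter_eq_rectsAt {ι : Type} {R : ι → Set (ℝ × ℝ)} {a b c d : ι → ℝ}
    (hR : ∀ i, R i = Set.Icc (a i) (b i) ×ˢ Set.Icc (c i) (d i)) (V : Finset ι)
    {xs ys : Finset ℝ} (hxs : ∀ i ∈ V, a i ∈ xs ∧ b i ∈ xs)
    (hys : ∀ i ∈ V, c i ∈ ys ∧ d i ∈ ys) (p : ℝ × ℝ) :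
    hyperedge R p ∩ ↑V = ↑(rectsAt V (fun i => compress xs (a i) + 1)
      (fun i => compress xs (b i) + 1) (fun i => compress ys (c i)) (fun i => compress ys (d i))
      (compress xs p.1 + 1) (compress ys p.2)) := by
  ext i
  by_cases hi : i ∈ V
  · simp only [hyperedge, rectsAt, Set.mem_inter_iff, Set.mem_ofPred_eq, coe_filter, mem_coe,
      hR i, Set.mem_prod, mem_Icc_iff_compress (hxs i hi).1 (hxs i hi).2,
      mem_Icc_iff_compress (hys i hi).1 (hys i hi).2, Nat.add_le_add_iff_right, hi, and_true,
      true_and]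
  · simp [hyperedge, rectsAt, hi]

lemma natLog_add_one_mul_le {n k : ℕ} (hn : 2 ≤ n) (hk : 1 ≤ k) :
    (((Nat.log 2 (4 * n + 1) + 1) * (12 * k + 1) : ℕ) : ℝ) ≤ 104 * k * Real.log n := by
  have hlog2 := Real.log_two_gt_d9
  have hn' : (2 : ℝ) ≤ n := by exact_mod_cast hn
  have hlogn : Real.log 2 ≤ Real.log n := Real.log_le_log (by norm_num) hn'
  have hpow : ((4 * n + 1 : ℕ) : ℝ) ≤ (n : ℝ) ^ 4 := by
    have : 4 * n + 1 ≤ n ^ 4 := by nlinarith [Nat.pow_le_pow_left hn 3]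
    exact_mod_cast this
  have hlevels : (Nat.log 2 (4 * n + 1) : ℝ) * Real.log 2 ≤ 4 * Real.log n := by
    have h := Real.natLog_le_logb (4 * n + 1) 2
    rw [Real.logb, Nat.cast_ofNat, le_div_iff₀ (by linarith)] at h
    calc _ ≤ Real.log ((4 * n + 1 : ℕ) : ℝ) := by exact_mod_cast h
      _ ≤ Real.log ((n : ℝ) ^ 4) := Real.log_le_log (by positivity) hpow
      _ = 4 * Real.log n := by rw [Real.log_pow]; norm_num
  have hL : (Nat.log 2 (4 * n + 1) : ℝ) + 1 ≤ 8 * Real.log n := by nlinarith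
  have hk' : (1 : ℝ) ≤ k := by exact_mod_cast hk
  push_cast
  calc ((Nat.log 2 (4 * n + 1) : ℝ) + 1) * (12 * k + 1) ≤ (8 * Real.log n) * (13 * k) := by
        gcongr; linarith
    _ = 104 * k * Real.log n := by ring

theorem exists_colorful_coloring_rects {ι : Type} [LinearOrder ι] {R : ι → Set (ℝ × ℝ)}
    {a b c d : ι → ℝ} (hab : ∀ i, a i ≤ b i)
    (hR : ∀ i, R i = Set.Icc (a i) (b i) ×ˢ Set.Icc (c i) (d i)) (V : Finset ι) (k : ℕ) :
    ∃ φ : ι → Fin ((Nat.log 2 (4 * #V + 1) + 1) * (12 * k + 1)), ∀ p : ℝ × ℝ,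
      ∃ S ⊆ hyperedge R p ∩ ↑V, S.ncard = min (hyperedge R p ∩ ↑V).ncard k ∧ Set.InjOn φ S := by
  have hends : ∀ f g : ι → ℝ, ∀ i ∈ V, f i ∈ V.image f ∪ V.image g ∧
      g i ∈ V.image f ∪ V.image g := fun f g i hi =>
    ⟨mem_union_left _ (mem_image_of_mem f hi), mem_union_right _ (mem_image_of_mem g hi)⟩
  set xs := V.image a ∪ V.image b
  set ys := V.image c ∪ V.image d
  have hxs : 2 * #xs ≤ 4 * #V := by
    have : #xs ≤ #V + #V := (card_union_le _ _).trans (add_le_add card_image_le card_image_le)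
    omega
  obtain ⟨φ, hφ⟩ := exists_colorful_coloring_rectsAt V (fun i => compress xs (a i) + 1)
    (fun i => compress xs (b i) + 1) (fun i => compress ys (c i)) (fun i => compress ys (d i))
    (fun _ => Nat.succ_pos _) (fun i => Nat.succ_le_succ (compress_mono (hab i)))
    (fun _ => Nat.succ_le_succ (compress_le_two_mul_card.trans hxs)) k
  refine ⟨φ, fun p => ?_⟩
  obtain ⟨S, hSE, hS, hinj⟩ := hφ (compress xs p.1 + 1) (compress ys p.2)
  obtain ⟨S', hS'S, hS'⟩ := exists_subset_card_eq hS
  rw [hyperedge_inter_eq_rectsAt hR V (hends a b) (hends c d)]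
  exact ⟨S', coe_subset.2 (hS'S.trans hSE), by rw [Set.ncard_coe_finset, Set.ncard_coe_finset, hS'],
    hinj.mono (coe_subset.2 hS'S)⟩

theorem stmt8 :
    ∃ C : ℝ, 0 < C ∧
      ∀ (ι : Type) [Fintype ι] (R : ι → Set (ℝ × ℝ)),
        (∀ i, IsAxisParallelRect (R i)) → 2 ≤ Fintype.card ι →
        ∀ (k : ℕ), 2 ≤ k →
          -- every vertex-induced sub-hypergraph `H[V']` of `H(R)` admits a
          -- `k`-colorful coloring with at most `C * k * log n` colors
          ∀ V' : Finset ι, ∃ φ : ι → ℕ,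
            ((V'.image φ).card : ℝ) ≤ C * k * Real.log (Fintype.card ι) ∧
            ∀ p : ℝ × ℝ, ∃ S ⊆ hyperedge R p ∩ ↑V',
              S.ncard = min (hyperedge R p ∩ ↑V').ncard k ∧ Set.InjOn φ S := by
  refine ⟨104, by norm_num, fun ι _ R hrect hn k hk V' => ?_⟩
  let _ : LinearOrder ι := LinearOrder.lift' _ (Fintype.equivFin ι).injective
  choose a b c d hab _ hR using hrect
  obtain ⟨φ, hφ⟩ := exists_colorful_coloring_rects hab hR V' k
  refine ⟨fun i => φ i, ?_, fun p => ?_⟩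
  · calc ((V'.image fun i => (φ i : ℕ)).card : ℝ)
        ≤ (((Nat.log 2 (4 * #V' + 1) + 1) * (12 * k + 1) : ℕ) : ℝ) := by
          exact_mod_cast (card_le_card (image_subset_iff.2 fun i _ => mem_range.2 (φ i).2)).trans
            (card_range _).le
      _ ≤ (((Nat.log 2 (4 * Fintype.card ι + 1) + 1) * (12 * k + 1) : ℕ) : ℝ) := by
          gcongr
          exact card_le_univ V'
      _ ≤ _ := natLog_add_one_mul_le hn (by omega)
  obtain ⟨S, hS, hcard, hinj⟩ := hφ p
  exact ⟨S, hS, hcard, Fin.val_injective.comp_injOn hinj⟩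
end

section
/- There exists an absolute constant C such that the following holds. Let k ≥ 2 be an integer, and let R be a finite family of n axis-parallel rectangles in the plane ℝ² such that all rectangles in R intersect a common vertical line {(x, y) : x = t} for some t ∈ ℝ. Then the hypergraph H(R) induced by R admits a k-colorful coloring with at most C·k colors; that is, c_{H(R)}(k) = O(k). -/
open Finset

namespace SimpleGraph

variable {V : Type*} (G : SimpleGraph V) [DecidableRel G.Adj]

lemma sum_card_adj_eq (s : Finset V) :
    ∑ v ∈ s, #{w ∈ s | G.Adj v w} = #{p ∈ s ×ˢ s | G.Adj p.1 p.2} := by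
  rw [card_filter, sum_product]
  simp only [card_filter]

lemma exists_card_adj_le_of_card_adj_le {D : ℕ} {s : Finset V} (hs : s.Nonempty)
    (hG : #{p ∈ s ×ˢ s | G.Adj p.1 p.2} ≤ D * #s) : ∃ v ∈ s, #{w ∈ s | G.Adj v w} ≤ D := by
  refine exists_le_of_sum_le hs ?_
  rwa [sum_card_adj_eq, sum_const, smul_eq_mul, mul_comm]

variable [DecidableEq V]

lemma card_filter_sup_adj_le (H : SimpleGraph V) [DecidableRel H.Adj]
    [DecidableRel (G ⊔ H).Adj] (P : Finset (V × V)) :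
    #{p ∈ P | (G ⊔ H).Adj p.1 p.2} ≤ #{p ∈ P | G.Adj p.1 p.2} + #{p ∈ P | H.Adj p.1 p.2} := by
  refine (card_le_card fun p hp => ?_).trans (card_union_le _ _)
  simp only [mem_filter, mem_union, sup_adj] at hp ⊢
  tauto

lemma exists_coloring_of_forall_exists_card_adj_le (D : ℕ)
    (hG : ∀ s : Finset V, s.Nonempty → ∃ v ∈ s, #{w ∈ s | G.Adj v w} ≤ D) (s : Finset V) :
    ∃ φ : V → ℕ, (∀ v ∈ s, φ v ≤ D) ∧ ∀ v ∈ s, ∀ w ∈ s, G.Adj v w → φ v ≠ φ w := by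
  induction s using Finset.strongInduction with
  | _ s ih =>
  rcases s.eq_empty_or_nonempty with rfl | hs
  · simp
  obtain ⟨v, hv, hdeg⟩ := hG s hs
  obtain ⟨φ, hφD, hφ⟩ := ih (s.erase v) (erase_ssubset hv)
  have hfree : ((range (D + 1)) \ {w ∈ s.erase v | G.Adj v w}.image φ).Nonempty := by
    refine card_pos.1 (lt_of_lt_of_le ?_ (le_card_sdiff _ _))
    have := (card_image_le (s := {w ∈ s.erase v | G.Adj v w}) (f := φ)).trans
      ((card_le_card (filter_subset_filter _ (erase_subset v s))).trans hdeg)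
    rw [card_range]
    omega
  obtain ⟨m, hm⟩ := hfree
  obtain ⟨hmD, hmφ⟩ := mem_sdiff.1 hm
  have hm_ne : ∀ w ∈ s, G.Adj v w → m ≠ φ w := fun w hw hvw hmw =>
    hmφ (mem_image.2 ⟨w, mem_filter.2 ⟨mem_erase.2 ⟨G.ne_of_adj hvw |>.symm, hw⟩, hvw⟩, hmw.symm⟩)
  refine ⟨Function.update φ v m, fun u hu => ?_, fun u hu w hw huw => ?_⟩
  · rcases eq_or_ne u v with rfl | huv
    · simpa using mem_range.1 hmD
    · simpa [huv] using hφD u (mem_erase.2 ⟨huv, hu⟩)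
  · rcases eq_or_ne u v with rfl | huv
    · simpa [(G.ne_of_adj huw).symm] using hm_ne w hw huw
    rcases eq_or_ne w v with rfl | hwv
    · simpa [huv] using (hm_ne u hu huw.symm).symm
    simpa [huv, hwv] using hφ u (mem_erase.2 ⟨huv, hu⟩) w (mem_erase.2 ⟨hwv, hw⟩) huw

end SimpleGraph

namespace ColorfulColoring

variable {ι K : Type*} [LinearOrder K] (κ : ι → K) (k : ℕ)

/-- Ties in `κ` can make this larger than `k`; its cardinality is `min #A k` once `κ` is
injective. -/
def lowest (A : Finset ι) : Finset ι := {i ∈ A | #{j ∈ A | κ j < κ i} < k}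

variable {κ k}

lemma lowest_subset (A : Finset ι) : lowest κ k A ⊆ A := filter_subset _ _

lemma lowest_subset_lowest {A E : Finset ι} (hEA : E ⊆ A)
    (hE : ∀ i ∈ E, ∀ j ∈ A, κ j < κ i → j ∈ E) : lowest κ k E ⊆ lowest κ k A := by
  intro i hi
  simp only [lowest, mem_filter] at hi ⊢
  refine ⟨hEA hi.1, (card_le_card fun j hj => ?_).trans_lt hi.2⟩
  simp only [mem_filter] at hj ⊢
  exact ⟨hE i hi.1 j hj.1 hj.2, hj.2⟩

variable [DecidableEq ι]

lemma lowest_inter_subset {A B : Finset ι} (hBA : B ⊆ A) : lowest κ k A ∩ B ⊆ lowest κ k B := by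
  intro i hi
  simp only [lowest, mem_inter, mem_filter] at hi ⊢
  exact ⟨hi.2, (card_le_card (filter_subset_filter _ hBA)).trans_lt hi.1.2⟩

lemma lowest_insert {A : Finset ι} {a : ι} (ha : ∀ x ∈ A, κ x < κ a) :
    lowest κ k (insert a A) = if #A < k then insert a (lowest κ k A) else lowest κ k A := by
  have hlt (x) (hx : x ∈ A) : {j ∈ insert a A | κ j < κ x} = {j ∈ A | κ j < κ x} := by
    rw [filter_insert, if_neg (ha x hx).not_gt]
  have hA : {j ∈ insert a A | κ j < κ a} = A := by
    rw [filter_insert, if_neg (lt_irrefl _), filter_true_of_mem ha]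
  ext x
  split_ifs with h <;> by_cases hx : x = a <;> simp_all [lowest]

lemma card_lowest (hκ : Function.Injective κ) (A : Finset ι) : #(lowest κ k A) = min #A k := by
  induction A using induction_on_max_value κ with
  | empty => simp [lowest]
  | insert a A haA hle ih =>
    have ha : ∀ x ∈ A, κ x < κ a := fun x hx =>
      (hle x hx).lt_of_ne (hκ.ne (ne_of_mem_of_not_mem hx haA))
    have ha' : a ∉ lowest κ k A := fun h => haA (lowest_subset A h)
    rw [lowest_insert ha, card_insert_of_notMem haA]
    split_ifs with h
    · rw [card_insert_of_notMem ha', ih]; omega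
    · rw [ih]; omega

lemma card_lowest_le (hκ : Function.Injective κ) (A : Finset ι) : #(lowest κ k A) ≤ k :=
  (card_lowest hκ A).trans_le (min_le_right _ _)

lemma card_lowest_sdiff_lowest_of_subset (hκ : Function.Injective κ) {A B : Finset ι}
    (hBA : B ⊆ A) : #(lowest κ k B \ lowest κ k A) ≤ #(A \ B) := by
  have h₁ := card_sdiff_add_card_inter (lowest κ k B) (lowest κ k A)
  have h₂ : #(lowest κ k A ∩ B) ≤ #(lowest κ k B ∩ lowest κ k A) := by
    rw [inter_comm (lowest κ k B)]
    exact card_le_card (subset_inter inter_subset_left (lowest_inter_subset hBA))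
  have h₃ : #(lowest κ k A) ≤ #(lowest κ k A ∩ B) + #(A \ B) := by
    refine (card_le_card fun i hi => ?_).trans (card_union_le _ _)
    by_cases hiB : i ∈ B
    · exact mem_union_left _ (mem_inter.2 ⟨hi, hiB⟩)
    · exact mem_union_right _ (mem_sdiff.2 ⟨lowest_subset A hi, hiB⟩)
  have h₄ : #(lowest κ k B) ≤ #(lowest κ k A) := by
    rw [card_lowest hκ, card_lowest hκ]
    exact min_le_min_right _ (card_le_card hBA)
  omega

lemma card_lowest_sdiff_lowest_le (hκ : Function.Injective κ) (A A' : Finset ι) :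
    #(lowest κ k A' \ lowest κ k A) ≤ #(A' \ A) + #(A \ A') := by
  have hsplit : lowest κ k A' \ lowest κ k A ⊆
      (A' \ A) ∪ (lowest κ k (A ∩ A') \ lowest κ k A) := by
    intro i hi
    obtain ⟨hiA', hiA⟩ := mem_sdiff.1 hi
    by_cases hi : i ∈ A
    · refine mem_union_right _ (mem_sdiff.2 ⟨?_, hiA⟩)
      rw [inter_comm]
      exact lowest_inter_subset inter_subset_left
        (mem_inter.2 ⟨hiA', mem_inter.2 ⟨lowest_subset A' hiA', hi⟩⟩)
    · exact mem_union_left _ (mem_sdiff.2 ⟨lowest_subset A' hiA', hi⟩)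
  calc #(lowest κ k A' \ lowest κ k A)
      ≤ #(A' \ A) + #(lowest κ k (A ∩ A') \ lowest κ k A) :=
        (card_le_card hsplit).trans (card_union_le _ _)
    _ ≤ #(A' \ A) + #(A \ A') := by
        rw [← sdiff_inter_self_left A A']
        exact Nat.add_le_add_left (card_lowest_sdiff_lowest_of_subset hκ inter_subset_left) _

lemma card_product_self_sdiff_le {T T' : Finset ι} (hT' : #T' ≤ k) :
    #(T' ×ˢ T' \ T ×ˢ T) ≤ 2 * k * #(T' \ T) := by
  have hsub : T' ×ˢ T' \ T ×ˢ T ⊆ (T' \ T) ×ˢ T' ∪ T' ×ˢ (T' \ T) := by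
    intro p hp
    simp only [mem_sdiff, mem_product, mem_union] at hp ⊢
    tauto
  calc #(T' ×ˢ T' \ T ×ˢ T) ≤ #(T' \ T) * #T' + #T' * #(T' \ T) := by
        simpa only [card_product] using (card_le_card hsub).trans (card_union_le _ _)
    _ ≤ 2 * k * #(T' \ T) := by nlinarith

variable (c d : ι → ℝ) (s : Finset ι)

noncomputable def activeAt (y : ℝ) : Finset ι := {l ∈ s | c l ≤ y ∧ y ≤ d l}

variable {c d s}

lemma card_activeAt_sdiff_add_card_le {y y' : ℝ} (hy : y' ≤ y) :
    #(activeAt c d s y \ activeAt c d s y') + #{l ∈ s | c l ≤ y'} ≤ #{l ∈ s | c l ≤ y} := by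
  have hsub : {l ∈ s | c l ≤ y'} ⊆ {l ∈ s | c l ≤ y} :=
    monotone_filter_right s fun _ _ h => h.trans hy
  rw [← card_sdiff_add_card_eq_card hsub]
  refine Nat.add_le_add_right (card_le_card fun l hl => ?_) _
  simp only [activeAt, mem_sdiff, mem_filter] at hl ⊢
  exact ⟨⟨hl.1.1, hl.1.2.1⟩, fun h => hl.2 ⟨hl.1.1, h.2, hy.trans hl.1.2.2⟩⟩

lemma card_activeAt_sdiff_add_card_lt_le {y y' : ℝ} (hy : y' ≤ y) :
    #(activeAt c d s y' \ activeAt c d s y) + #{l ∈ s | d l < y'} ≤ #{l ∈ s | d l < y} := by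
  have hsub : {l ∈ s | d l < y'} ⊆ {l ∈ s | d l < y} :=
    monotone_filter_right s fun _ _ h => h.trans_le hy
  rw [← card_sdiff_add_card_eq_card hsub]
  refine Nat.add_le_add_right (card_le_card fun l hl => ?_) _
  simp only [activeAt, mem_sdiff, mem_filter] at hl ⊢
  exact ⟨⟨hl.1.1, not_le.1 fun h => hl.2 ⟨hl.1.1, hl.1.2.1.trans hy, h⟩⟩,
    fun h => (h.2.trans_le hl.1.2.2).false⟩

lemma card_lowest_sq_le (hκ : Function.Injective κ) (y : ℝ) :
    #(lowest κ k (activeAt c d s y) ×ˢ lowest κ k (activeAt c d s y)) ≤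
      2 * k * (#{l ∈ s | c l ≤ y} + #{l ∈ s | d l < y}) := by
  have hact : #(activeAt c d s y) ≤ #{l ∈ s | c l ≤ y} :=
    card_le_card (monotone_filter_right s fun _ _ h => h.1)
  have hL := card_le_card (lowest_subset (κ := κ) (k := k) (activeAt c d s y))
  rw [card_product]
  calc _ ≤ k * #(activeAt c d s y) := Nat.mul_le_mul (card_lowest_le hκ _) hL
    _ ≤ 2 * k * (#{l ∈ s | c l ≤ y} + #{l ∈ s | d l < y}) := by nlinarith

/-- The right-hand side is a potential: `2k` for each endpoint below height `y`. Passing an endpoint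
changes the active set by one interval, hence the `k` lowest by at most one, creating at most `2k`
new pairs. -/
lemma card_biUnion_lowest_sq_le (hκ : Function.Injective κ) (W : Finset ℝ) (y : ℝ)
    (hW : ∀ w ∈ W, w ≤ y) :
    #(W.biUnion fun w => lowest κ k (activeAt c d s w) ×ˢ lowest κ k (activeAt c d s w)) ≤
      2 * k * (#{l ∈ s | c l ≤ y} + #{l ∈ s | d l < y}) := by
  induction W using Finset.induction_on_max generalizing y with
  | empty => simp
  | insert a W hlt ih =>
    set L := fun w => lowest κ k (activeAt c d s w)
    have hay : a ≤ y := hW a (mem_insert_self a W)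
    have hmono : 2 * k * (#{l ∈ s | c l ≤ a} + #{l ∈ s | d l < a}) ≤
        2 * k * (#{l ∈ s | c l ≤ y} + #{l ∈ s | d l < y}) := by
      gcongr 2 * k * (#?_ + #?_)
      · exact monotone_filter_right s fun _ _ h => h.trans hay
      · exact monotone_filter_right s fun _ _ h => h.trans_le hay
    refine le_trans ?_ hmono
    rw [biUnion_insert]
    rcases W.eq_empty_or_nonempty with rfl | hne
    · simpa using card_lowest_sq_le hκ a
    set a' := W.max' hne
    have ha' : a' ≤ a := (hlt a' (max'_mem W hne)).le
    have hU := ih a' fun w hw => le_max' W w hw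
    have hsub : L a' ×ˢ L a' ⊆ W.biUnion fun w => L w ×ˢ L w :=
      subset_biUnion_of_mem (fun w => L w ×ˢ L w) (max'_mem W hne)
    have hnew := card_activeAt_sdiff_add_card_le (c := c) (d := d) (s := s) ha'
    have hold := card_activeAt_sdiff_add_card_lt_le (c := c) (d := d) (s := s) ha'
    have hstep : #(L a \ L a') ≤
        #(activeAt c d s a \ activeAt c d s a') + #(activeAt c d s a' \ activeAt c d s a) :=
      card_lowest_sdiff_lowest_le hκ _ _
    calc #(L a ×ˢ L a ∪ W.biUnion fun w => L w ×ˢ L w)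
        ≤ #(L a ×ˢ L a \ L a' ×ˢ L a') + #(W.biUnion fun w => L w ×ˢ L w) := by
          rw [← card_sdiff_add_card]
          exact Nat.add_le_add_right (card_le_card (sdiff_subset_sdiff subset_rfl hsub)) _
      _ ≤ 2 * k * #(L a \ L a') + 2 * k * (#{l ∈ s | c l ≤ a'} + #{l ∈ s | d l < a'}) :=
          Nat.add_le_add (card_product_self_sdiff_le (card_lowest_le hκ _)) hU
      _ ≤ 2 * k * (#{l ∈ s | c l ≤ a} + #{l ∈ s | d l < a}) := by
          rw [← mul_add]
          exact Nat.mul_le_mul_left _ (by omega)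

lemma mem_lowest_activeAt_of_subset {t : Finset ι} (hst : s ⊆ t) {i : ι} {y : ℝ} (hi : i ∈ s)
    (h : i ∈ lowest κ k (activeAt c d t y)) : i ∈ lowest κ k (activeAt c d s y) := by
  have hact : activeAt c d s y ⊆ activeAt c d t y := filter_subset_filter _ hst
  exact lowest_inter_subset hact
    (mem_inter.2 ⟨h, mem_filter.2 ⟨hi, (mem_filter.1 (lowest_subset _ h)).2⟩⟩)

variable (κ k c d s) in
def coLowestGraph : SimpleGraph ι where
  Adj i j := i ≠ j ∧ ∃ y, i ∈ lowest κ k (activeAt c d s y) ∧ j ∈ lowest κ k (activeAt c d s y)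
  symm := ⟨fun _ _ ⟨hij, y, hi, hj⟩ => ⟨hij.symm, y, hj, hi⟩⟩
  loopless := ⟨fun _ h => h.1 rfl⟩

lemma card_adj_coLowestGraph_le (hκ : Function.Injective κ) {t : Finset ι} (hst : s ⊆ t)
    [DecidableRel (coLowestGraph κ k c d t).Adj] :
    #{p ∈ s ×ˢ s | (coLowestGraph κ k c d t).Adj p.1 p.2} ≤ 4 * k * #s := by
  set P := {p ∈ s ×ˢ s | (coLowestGraph κ k c d t).Adj p.1 p.2}
  have hwit : ∀ p ∈ P, ∃ y, p.1 ∈ lowest κ k (activeAt c d s y) ∧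
      p.2 ∈ lowest κ k (activeAt c d s y) := by
    intro p hp
    obtain ⟨hps, -, y, h₁, h₂⟩ := mem_filter.1 hp
    obtain ⟨hp₁, hp₂⟩ := mem_product.1 hps
    exact ⟨y, mem_lowest_activeAt_of_subset hst hp₁ h₁, mem_lowest_activeAt_of_subset hst hp₂ h₂⟩
  choose! f hf using hwit
  obtain ⟨y, hy⟩ := (P.image f).bddAbove
  have hsub : P ⊆ (P.image f).biUnion fun w =>
      lowest κ k (activeAt c d s w) ×ˢ lowest κ k (activeAt c d s w) := fun p hp =>
    mem_biUnion.2 ⟨f p, mem_image_of_mem f hp, mem_product.2 (hf p hp)⟩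
  have hc : #{l ∈ s | c l ≤ y} ≤ #s := card_filter_le _ _
  have hd : #{l ∈ s | d l < y} ≤ #s := card_filter_le _ _
  calc #P ≤ 2 * k * (#{l ∈ s | c l ≤ y} + #{l ∈ s | d l < y}) :=
        (card_le_card hsub).trans (card_biUnion_lowest_sq_le hκ _ y fun _ hw => hy hw)
    _ ≤ 4 * k * #s := by nlinarith

section LexKey

variable {ι α β : Type*}

def lexKey (f : ι → α) (g : ι → β) (i : ι) : α ×ₗ β := toLex (f i, g i)

variable {f : ι → α} {g : ι → β}

lemma lexKey_injective (hg : Function.Injective g) : Function.Injective (lexKey f g) :=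
  fun _ _ h => hg (Prod.ext_iff.1 (toLex.injective h)).2

variable [LinearOrder α] [LinearOrder β]

lemma le_of_lexKey_lt {i j : ι} (h : lexKey f g i < lexKey f g j) : f i ≤ f j := by
  rcases Prod.Lex.lt_iff.1 h with h | ⟨h, -⟩
  · exact h.le
  · exact h.le

lemma lowest_filter_le_subset {k : ℕ} (A : Finset ι) (z : α) :
    lowest (lexKey f g) k {i ∈ A | f i ≤ z} ⊆ lowest (lexKey f g) k A :=
  lowest_subset_lowest (filter_subset _ _) fun _ hi _ hj hji =>
    mem_filter.2 ⟨hj, (le_of_lexKey_lt hji).trans (mem_filter.1 hi).2⟩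

end LexKey

variable {ι K γ : Type*} [DecidableEq ι] [LinearOrder K] {κ : ι → K} {k : ℕ}

lemma exists_injOn_of_lowest_subset (hκ : Function.Injective κ) {E A : Finset ι}
    (hE : lowest κ k E ⊆ lowest κ k A) {φ : ι → γ}
    (hφ : ∀ i ∈ lowest κ k A, ∀ j ∈ lowest κ k A, i ≠ j → φ i ≠ φ j) :
    ∃ S ⊆ (E : Set ι), S.ncard = min (E : Set ι).ncard k ∧ Set.InjOn φ S := by
  refine ⟨lowest κ k E, coe_subset.2 (lowest_subset E), ?_, fun i hi j hj hij => ?_⟩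
  · rw [Set.ncard_coe_finset, Set.ncard_coe_finset, card_lowest hκ]
  · by_contra hne
    exact hφ i (hE hi) j (hE hj) hne hij

section Rectangles

variable {ι : Type} [Fintype ι] {R : ι → Set (ℝ × ℝ)} {a b c d : ι → ℝ} {p : ℝ × ℝ}

lemma hyperedge_eq_filter_left (hR : ∀ i, R i = Set.Icc (a i) (b i) ×ˢ Set.Icc (c i) (d i))
    (hp : ∀ i, p.1 ≤ b i) :
    hyperedge R p = ↑({i ∈ activeAt c d univ p.2 | a i ≤ p.1} : Finset ι) := by
  ext i
  simp only [hyperedge, activeAt, Set.mem_ofPred_eq, coe_filter, mem_filter, mem_univ, true_and,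
    hR i, Set.mem_prod, Set.mem_Icc]
  have := hp i
  tauto

lemma hyperedge_eq_filter_right (hR : ∀ i, R i = Set.Icc (a i) (b i) ×ˢ Set.Icc (c i) (d i))
    (hp : ∀ i, a i ≤ p.1) :
    hyperedge R p = ↑({i ∈ activeAt c d univ p.2 | -b i ≤ -p.1} : Finset ι) := by
  ext i
  simp only [hyperedge, activeAt, Set.mem_ofPred_eq, coe_filter, mem_filter, mem_univ, true_and,
    hR i, Set.mem_prod, Set.mem_Icc, neg_le_neg_iff]
  have := hp i
  tauto

end Rectangles

end ColorfulColoring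

open ColorfulColoring

theorem stmt9 :
    ∃ C : ℝ, 0 < C ∧
      ∀ (k : ℕ), 2 ≤ k →
        ∀ (ι : Type) [Fintype ι] (R : ι → Set (ℝ × ℝ)) (t : ℝ),
          (∀ i, IsAxisParallelRect (R i)) →
          -- all rectangles intersect the common vertical line `x = t`
          (∀ i, ∃ y : ℝ, ((t, y) : ℝ × ℝ) ∈ R i) →
          ∃ φ : ι → ℕ,
            ((Finset.univ.image φ).card : ℝ) ≤ C * k ∧
            ∀ p : ℝ × ℝ, ∃ S ⊆ hyperedge R p,
              S.ncard = min (hyperedge R p).ncard k ∧ Set.InjOn φ S := by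
  classical
  refine ⟨9, by norm_num, fun k hk ι _ R t hR hstab => ?_⟩
  choose a b c d _ _ hR using hR
  have hab (i : ι) : a i ≤ t ∧ t ≤ b i := by
    obtain ⟨y, hy⟩ := hstab i
    exact (hR i ▸ hy).1
  have he := (Fintype.equivFin ι).injective
  set κ₁ := lexKey a (Fintype.equivFin ι)
  set κ₂ := lexKey (fun i => -b i) (Fintype.equivFin ι)
  set G := coLowestGraph κ₁ k c d univ ⊔ coLowestGraph κ₂ k c d univ
  have hG (s : Finset ι) : #{p ∈ s ×ˢ s | G.Adj p.1 p.2} ≤ 8 * k * #s :=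
    calc #{p ∈ s ×ˢ s | G.Adj p.1 p.2}
        ≤ #{p ∈ s ×ˢ s | (coLowestGraph κ₁ k c d univ).Adj p.1 p.2} +
          #{p ∈ s ×ˢ s | (coLowestGraph κ₂ k c d univ).Adj p.1 p.2} :=
          SimpleGraph.card_filter_sup_adj_le _ _ _
      _ ≤ 4 * k * #s + 4 * k * #s :=
          add_le_add (card_adj_coLowestGraph_le (lexKey_injective he) (subset_univ s))
            (card_adj_coLowestGraph_le (lexKey_injective he) (subset_univ s))
      _ = 8 * k * #s := by ring
  obtain ⟨φ, hφD, hφ⟩ := G.exists_coloring_of_forall_exists_card_adj_le (8 * k)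
    (fun s hs => G.exists_card_adj_le_of_card_adj_le hs (hG s)) univ
  refine ⟨φ, ?_, fun p => ?_⟩
  · have hcard : #(univ.image φ) ≤ 8 * k + 1 := by
      simpa using card_le_card (t := range (8 * k + 1))
        (image_subset_iff.2 fun i hi => mem_range.2 (Nat.lt_succ_of_le (hφD i hi)))
    have hk : (1 : ℝ) ≤ k := by exact_mod_cast (by omega : 1 ≤ k)
    calc (#(univ.image φ) : ℝ) ≤ 8 * k + 1 := by exact_mod_cast hcard
      _ ≤ 9 * k := by linarith
  rcases le_total p.1 t with hp | hp
  · rw [hyperedge_eq_filter_left hR fun i => hp.trans (hab i).2]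
    exact exists_injOn_of_lowest_subset (lexKey_injective he) (lowest_filter_le_subset _ _)
      fun i hi j hj hij => hφ i (mem_univ i) j (mem_univ j) (Or.inl ⟨hij, p.2, hi, hj⟩)
  · rw [hyperedge_eq_filter_right hR fun i => (hab i).1.trans hp]
    exact exists_injOn_of_lowest_subset (lexKey_injective he) (lowest_filter_le_subset _ _)
      fun i hi j hj hij => hφ i (mem_univ i) j (mem_univ j) (Or.inr ⟨hij, p.2, hi, hj⟩)
end

section
/- Let k ≥ 1 be an integer and let n = 2^k − 1. For the discrete interval hypergraph I_n on n vertices, k colors suffice and are necessary for a conflict-free coloring: I_n admits a conflict-free coloring with k colors, and every conflict-free coloring of I_n uses at least k colors; that is, f_{I_n}(1) = k. -/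
/-- A coloring `φ` is conflict-free for the discrete interval hypergraph `I_n`
if every discrete interval `{a, …, b} ⊆ {1, …, n}` contains a vertex whose
color appears exactly once in the interval. -/
def IsCFIntervals (n : ℕ) (φ : ℕ → ℕ) : Prop :=
  ∀ a b : ℕ, 1 ≤ a → a ≤ b → b ≤ n →
    ∃ v ∈ Finset.Icc a b, ∀ u ∈ Finset.Icc a b, φ u = φ v → u = v

/-!
Coloring `v` by its 2-adic valuation is conflict-free: two multiples of `2 ^ m` with odd
cofactors enclose a multiple of `2 ^ (m + 1)`, so in an interval of positive integers the
maximal valuation is attained only once. Below `2 ^ k` there are only `k` valuations.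

Conversely, the uniquely colored vertex of an interval with `2 ^ (k + 1) - 1` points leaves,
on one of its sides, an interval with `2 ^ k - 1` points that misses its color; by induction
such an interval already sees `k` other colors.
-/

open Finset

theorem exists_mem_Ioc_padicValNat_two_lt {x y : ℕ} (hx : x ≠ 0) (hxy : x < y)
    (h : padicValNat 2 x = padicValNat 2 y) :
    ∃ w ∈ Ioc x y, padicValNat 2 x < padicValNat 2 w := by
  set m := padicValNat 2 x
  obtain ⟨s, hs⟩ : 2 ^ m ∣ x := pow_padicValNat_dvd
  obtain ⟨t, ht⟩ : 2 ^ m ∣ y := h ▸ pow_padicValNat_dvd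
  have hs_odd : ¬ 2 ∣ s := fun h2 =>
    pow_succ_padicValNat_not_dvd hx (hs ▸ pow_succ 2 m ▸ mul_dvd_mul_left _ h2)
  have hst : s < t := Nat.lt_of_mul_lt_mul_left (hs ▸ ht ▸ hxy)
  refine ⟨2 ^ m * (s + 1), mem_Ioc.2 ⟨?_, ?_⟩, ?_⟩
  · rw [hs]; exact Nat.mul_lt_mul_of_pos_left s.lt_succ_self (by positivity)
  · rw [ht]; exact Nat.mul_le_mul_left _ hst
  · rw [← Nat.succ_le_iff, ← padicValNat_dvd_iff_le (by positivity), pow_succ]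
    exact mul_dvd_mul_left _ (by omega)

theorem isCFIntervals_padicValNat_two (n : ℕ) : IsCFIntervals n (padicValNat 2) := by
  intro a b ha hab _
  obtain ⟨v, hv, hmax⟩ := exists_max_image (Icc a b) (padicValNat 2) (nonempty_Icc.2 hab)
  refine ⟨v, hv, fun u hu huv => ?_⟩
  rw [mem_Icc] at hu hv
  by_contra hne
  rcases Nat.lt_or_gt_of_ne hne with h | h
  · obtain ⟨w, hw, hlt⟩ := exists_mem_Ioc_padicValNat_two_lt (by omega) h huv
    rw [mem_Ioc] at hw
    exact (hmax w (mem_Icc.2 ⟨by omega, by omega⟩)).not_gt (huv ▸ hlt)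
  · obtain ⟨w, hw, hlt⟩ := exists_mem_Ioc_padicValNat_two_lt (by omega) h huv.symm
    rw [mem_Ioc] at hw
    exact (hmax w (mem_Icc.2 ⟨by omega, by omega⟩)).not_gt hlt

theorem card_image_padicValNat_two_Icc_le {n k : ℕ} (hn : n < 2 ^ k) :
    ((Icc 1 n).image (padicValNat 2)).card ≤ k := by
  refine (card_le_card fun c hc => ?_).trans (card_range k).le
  obtain ⟨v, hv, rfl⟩ := mem_image.1 hc
  rw [mem_Icc] at hv
  exact mem_range.2 <| (padicValNat_le_nat_log v).trans_lt <|
    Nat.log_lt_of_lt_pow (by omega) (by omega)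

theorem Finset.card_image_lt_card_image_of_unique {α β : Type*} [DecidableEq β]
    {s t : Finset α} {φ : α → β} {v : α} (hst : s ⊆ t) (hv : v ∈ t) (hvs : v ∉ s)
    (huniq : ∀ u ∈ t, φ u = φ v → u = v) : (s.image φ).card < (t.image φ).card := by
  refine card_lt_card <| (ssubset_iff_of_subset (image_subset_image hst)).2
    ⟨φ v, mem_image_of_mem φ hv, fun h => ?_⟩
  obtain ⟨u, hu, huv⟩ := mem_image.1 h
  exact hvs (huniq u (hst hu) huv ▸ hu)

theorem IsCFIntervals.le_card_image_Icc {n : ℕ} {φ : ℕ → ℕ} (hcf : IsCFIntervals n φ)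
    (k : ℕ) {a b : ℕ} (ha : 1 ≤ a) (hb : b ≤ n) (hlen : a + 2 ^ k ≤ b + 2) :
    k ≤ ((Icc a b).image φ).card := by
  induction k generalizing a b with
  | zero => exact Nat.zero_le _
  | succ k ih =>
    have hpow : 2 ^ (k + 1) = 2 * 2 ^ k := pow_succ' 2 k
    have : 1 ≤ 2 ^ k := Nat.one_le_two_pow
    obtain ⟨v, hv, huniq⟩ := hcf a b ha (by omega) hb
    rw [mem_Icc] at hv
    -- `[a, b]` minus `v` has `2 ^ (k + 1) - 2` points, so one side of `v` has `2 ^ k - 1`.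
    obtain ⟨c, d, hac, hdb, hvcd, hcd⟩ : ∃ c d, a ≤ c ∧ d ≤ b ∧ (d < v ∨ v < c) ∧
        c + 2 ^ k ≤ d + 2 := by
      rcases le_or_gt (a + 2 ^ k) (v + 1) with h | h
      · exact ⟨a, v - 1, le_rfl, by omega, by omega, by omega⟩
      · exact ⟨v + 1, b, by omega, le_rfl, by omega, by omega⟩
    exact (ih (by omega) (by omega) hcd).trans_lt <|
      card_image_lt_card_image_of_unique (Icc_subset_Icc hac hdb) (mem_Icc.2 hv)
        (by rw [mem_Icc]; omega) huniq

theorem stmt15_general (k : ℕ) (n : ℕ) (hn : n = 2 ^ k - 1) :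
    (∃ φ : ℕ → ℕ, ((Finset.Icc 1 n).image φ).card ≤ k ∧ IsCFIntervals n φ) ∧
    (∀ φ : ℕ → ℕ, IsCFIntervals n φ → k ≤ ((Finset.Icc 1 n).image φ).card) := by
  have : 1 ≤ 2 ^ k := Nat.one_le_two_pow
  exact ⟨⟨padicValNat 2, card_image_padicValNat_two_Icc_le (by omega),
      isCFIntervals_padicValNat_two n⟩,
    fun φ hcf => hcf.le_card_image_Icc k le_rfl le_rfl (by omega)⟩

/-- For `n = 2^k - 1`, exactly `k` colors suffice and are necessary for a
conflict-free coloring of the discrete interval hypergraph `I_n`: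
`f_{I_n}(1) = k`. -/
theorem stmt15 (k : ℕ) (hk : 1 ≤ k) (n : ℕ) (hn : n = 2 ^ k - 1) :
    (∃ φ : ℕ → ℕ, ((Finset.Icc 1 n).image φ).card ≤ k ∧ IsCFIntervals n φ) ∧
    (∀ φ : ℕ → ℕ, IsCFIntervals n φ → k ≤ ((Finset.Icc 1 n).image φ).card) :=
  stmt15_general k n hn
end
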